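/- arXiv:1309.6063 — 5 statements merged into one kernel-verified Lean document; each statement's English description precedes it below -/
import Mathlib

section
/- Suppose $t \ge 1$ and $C > 0$ are such that for all $n$ and every $m$-linear form $T : \ell_{p_1}^n \times \cdots \times \ell_{p_m}^n \to \mathbb{C}$ with $\frac{1}{2} \le \frac{1}{p_1} + \cdots + \frac{1}{p_m} < 1$, one has $(\sum_{i_1,\dots,i_m} |T(e_{i_1},\dots,e_{i_m})|^t)^{1/t} \le C\|T\|$. Then $t \ge \lambda$, where $\frac{1}{\lambda} = 1 - (\frac{1}{p_1} + \cdots + \frac{1}{p_m})$. -/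
open scoped ENNReal Classical
open Finset

lemma core_amgm {m n : ℕ} (hn : 0 < n) (w : Fin m → ℝ) (hw : ∀ j, 0 ≤ w j)
    (S : ℝ) (hS : S = ∑ j, w j) (hS2 : S < 1)
    (u : Fin m → Fin n → ℝ) (hu : ∀ j i, 0 ≤ u j i)
    (husum : ∀ j, w j ≠ 0 → ∑ i, u j i ≤ 1) :
    ∑ i, ∏ j, u j i ^ w j ≤ (n : ℝ) ^ (1 - S) := by
  have hn' : (0:ℝ) < n := by exact_mod_cast hn
  set W : Option (Fin m) → ℝ := fun o => o.elim (1 - S) w with hW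
  set Z : Fin n → Option (Fin m) → ℝ := fun i o => o.elim ((n:ℝ)⁻¹) (fun j => u j i) with hZ
  have hWsum : ∑ o : Option (Fin m), W o = 1 := by
    rw [Fintype.sum_option]
    simp [hW, hS]
  have hWnn : ∀ o, 0 ≤ W o := by
    rintro (_ | j)
    · simp [hW]; linarith
    · exact hw j
  have key : ∀ i, ((n:ℝ)⁻¹) ^ (1 - S) * ∏ j, u j i ^ w j ≤ ∑ o : Option (Fin m), W o * Z i o := by
    intro i
    have := Real.geom_mean_le_arith_mean_weighted univ W (Z i)
      (fun o _ => hWnn o) hWsum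
      (by rintro (_ | j) _
          · exact inv_nonneg.2 hn'.le
          · exact hu j i)
    calc ((n:ℝ)⁻¹) ^ (1 - S) * ∏ j, u j i ^ w j
        = ∏ o : Option (Fin m), Z i o ^ W o := by rw [Fintype.prod_option]; rfl
      _ ≤ ∑ o : Option (Fin m), W o * Z i o := this
  have sum_key : ((n:ℝ)⁻¹) ^ (1 - S) * ∑ i, ∏ j, u j i ^ w j ≤ 1 := by
    rw [mul_sum]
    calc ∑ i, ((n:ℝ)⁻¹) ^ (1 - S) * ∏ j, u j i ^ w j
        ≤ ∑ i, ∑ o : Option (Fin m), W o * Z i o := sum_le_sum fun i _ => key i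
      _ = ∑ o : Option (Fin m), W o * ∑ i, Z i o := by
          rw [Finset.sum_comm]; simp [mul_sum]
      _ ≤ ∑ o : Option (Fin m), W o := by
          have hsum1 : ∑ _i : Fin n, ((n:ℝ))⁻¹ = 1 := by
            rw [Finset.sum_const, Finset.card_univ, Fintype.card_fin, nsmul_eq_mul,
              mul_inv_cancel₀ hn'.ne']
          refine sum_le_sum ?_
          rintro (_ | j) _
          · simp [hW, hZ, hsum1]
          · rcases eq_or_ne (w j) 0 with h | h
            · simp [hW, hZ, h]
            · show w j * ∑ i, u j i ≤ w j
              exact mul_le_of_le_one_right (hw j) (husum j h)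
      _ = 1 := hWsum
  have hpos : (0:ℝ) < ((n:ℝ)⁻¹) ^ (1 - S) := by positivity
  have := (le_div_iff₀' hpos).mpr sum_key
  calc ∑ i, ∏ j, u j i ^ w j ≤ 1 / ((n:ℝ)⁻¹) ^ (1 - S) := this
    _ = (n : ℝ) ^ (1 - S) := by
        rw [Real.inv_rpow hn'.le, one_div, inv_inv]

lemma holder_aux {m n : ℕ} (w : Fin m → ℝ) (hw : ∀ j, 0 ≤ w j)
    (S : ℝ) (hS : S = ∑ j, w j) (hS2 : S < 1)
    (f : Fin m → Fin n → ℝ) (hf : ∀ j i, 0 ≤ f j i)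
    (N : Fin m → ℝ) (hN : ∀ j, 0 ≤ N j)
    (hbound : ∀ j, w j = 0 → ∀ i, f j i ≤ N j)
    (hsum : ∀ j, w j ≠ 0 → ∑ i, f j i ^ (w j)⁻¹ ≤ N j ^ (w j)⁻¹) :
    ∑ i, ∏ j, f j i ≤ (n : ℝ) ^ (1 - S) * ∏ j, N j := by
  rcases Nat.eq_zero_or_pos n with rfl | hn
  · simp only [Finset.univ_eq_empty, Finset.sum_empty, Nat.cast_zero]
    exact mul_nonneg (Real.rpow_nonneg le_rfl _) (Finset.prod_nonneg fun j _ => hN j)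
  by_cases hN0 : ∃ j₀, N j₀ = 0
  · obtain ⟨j₀, hj₀⟩ := hN0
    have hf0 : ∀ i, f j₀ i = 0 := by
      intro i
      rcases eq_or_ne (w j₀) 0 with h | h
      · exact le_antisymm (hj₀ ▸ hbound j₀ h i) (hf j₀ i)
      · have hwpos : 0 < w j₀ := (hw j₀).lt_of_ne (Ne.symm h)
        have h1 : ∑ i, f j₀ i ^ (w j₀)⁻¹ ≤ 0 := by
          have := hsum j₀ h
          rwa [hj₀, Real.zero_rpow (by positivity)] at this
        have h2 : ∀ i' ∈ univ, (0:ℝ) ≤ f j₀ i' ^ (w j₀)⁻¹ := fun i' _ =>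
          Real.rpow_nonneg (hf j₀ i') _
        have h3 : f j₀ i ^ (w j₀)⁻¹ = 0 :=
          le_antisymm (le_trans (Finset.single_le_sum h2 (mem_univ i)) h1) (h2 i (mem_univ i))
        have := congrArg (fun y => y ^ (w j₀)) h3
        simpa [← Real.rpow_natCast, ← Real.rpow_mul (hf j₀ i),
          inv_mul_cancel₀ h, Real.zero_rpow h] using this
    have : ∑ i, ∏ j, f j i = 0 := by
      apply Finset.sum_eq_zero
      intro i _
      exact Finset.prod_eq_zero (mem_univ j₀) (hf0 i)
    rw [this]
    exact mul_nonneg (Real.rpow_nonneg (Nat.cast_nonneg n) _)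
      (Finset.prod_nonneg fun j _ => hN j)
  push_neg at hN0
  have hNpos : ∀ j, 0 < N j := fun j => (hN j).lt_of_ne (Ne.symm (hN0 j))
  set u : Fin m → Fin n → ℝ := fun j i =>
    if w j = 0 then 1 else (f j i / N j) ^ (w j)⁻¹ with hu_def
  have hu : ∀ j i, 0 ≤ u j i := by
    intro j i; rw [hu_def]; dsimp only
    split_ifs
    · norm_num
    · exact Real.rpow_nonneg (div_nonneg (hf j i) (hN j)) _
  have husum : ∀ j, w j ≠ 0 → ∑ i, u j i ≤ 1 := by
    intro j h
    have hwpos : 0 < w j := (hw j).lt_of_ne (Ne.symm h)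
    have : ∑ i, u j i = (∑ i, f j i ^ (w j)⁻¹) / N j ^ (w j)⁻¹ := by
      rw [Finset.sum_div]
      refine Finset.sum_congr rfl fun i _ => ?_
      simp only [hu_def, if_neg h]
      rw [Real.div_rpow (hf j i) (hN j)]
    rw [this, div_le_one (Real.rpow_pos_of_pos (hNpos j) _)]
    exact hsum j h
  have hfu : ∀ j i, f j i ≤ N j * u j i ^ w j := by
    intro j i
    rcases eq_or_ne (w j) 0 with h | h
    · simp only [hu_def, if_pos h, h, Real.rpow_zero, mul_one]
      exact hbound j h i
    · simp only [hu_def, if_neg h]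
      rw [← Real.rpow_mul (div_nonneg (hf j i) (hN j)), inv_mul_cancel₀ h, Real.rpow_one,
        mul_div_cancel₀ _ (hNpos j).ne']
  calc ∑ i, ∏ j, f j i ≤ ∑ i, ∏ j, (N j * u j i ^ w j) := by
        refine sum_le_sum fun i _ => Finset.prod_le_prod (fun j _ => hf j i)
          (fun j _ => hfu j i)
    _ = (∏ j, N j) * ∑ i, ∏ j, u j i ^ w j := by
        rw [mul_sum]
        exact Finset.sum_congr rfl fun i _ => Finset.prod_mul_distrib
    _ ≤ (∏ j, N j) * (n : ℝ) ^ (1 - S) := by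
        refine mul_le_mul_of_nonneg_left ?_ (Finset.prod_nonneg fun j _ => hN j)
        exact core_amgm hn w hw S hS hS2 u hu husum
    _ = (n : ℝ) ^ (1 - S) * ∏ j, N j := mul_comm _ _

lemma pilp_apply_le_norm {ι : Type*} [Fintype ι] {p : ℝ≥0∞} (hp : p = ∞)
    (x : PiLp p (fun _ : ι => ℂ)) (i : ι) : ‖x i‖ ≤ ‖x‖ := by
  subst hp
  rw [PiLp.norm_eq_ciSup]
  exact le_ciSup (f := fun i => ‖x i‖) (Set.Finite.bddAbove (Set.finite_range _)) i

/-- if `t ≥ 1` and `C > 0` satisfy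
`(∑ |T(e_{i₁},…,e_{i_m})|^t)^{1/t} ≤ C‖T‖` for every `n` and every `m`-linear form
`T : ℓ_{p₁}ⁿ × ⋯ × ℓ_{p_m}ⁿ → ℂ`, where `1/2 ≤ 1/p₁ + ⋯ + 1/p_m < 1`, then `t ≥ λ`
with `1/λ = 1 - ∑ 1/p_j`. -/
theorem stmt7 (m : ℕ) (hm : 0 < m) (p : Fin m → ℝ≥0∞) [∀ j, Fact (1 ≤ p j)]
    (S lam : ℝ) (hS : S = ∑ j, ((p j).toReal)⁻¹) (hS1 : 1 / 2 ≤ S) (hS2 : S < 1)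
    (hlam : lam = (1 - S)⁻¹)
    (t C : ℝ) (ht : 1 ≤ t) (hC : 0 < C)
    (hineq : ∀ (n : ℕ)
      (T : ContinuousMultilinearMap ℂ (fun j : Fin m => PiLp (p j) fun _ : Fin n => ℂ) ℂ),
      (∑ k : Fin m → Fin n,
          ‖T (fun j => (WithLp.equiv (p j) (Fin n → ℂ)).symm (Pi.single (k j) 1))‖ ^ t) ^
          (1 / t) ≤ C * ‖T‖) :
    lam ≤ t := by
  have ht0 : (0:ℝ) < t := lt_of_lt_of_le one_pos ht
  have h1S : (0:ℝ) < 1 - S := by linarith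
  set w : Fin m → ℝ := fun j => ((p j).toReal)⁻¹ with hw_def
  have hw : ∀ j, 0 ≤ w j := fun j => inv_nonneg.2 ENNReal.toReal_nonneg
  have hwS : S = ∑ j, w j := hS
  -- w j = 0 ↔ p j = ∞
  have hwinf : ∀ j, w j = 0 → p j = ∞ := by
    intro j h
    have h' : (p j).toReal = 0 := by
      rwa [hw_def, inv_eq_zero] at h
    by_contra hne
    have h1 : 1 ≤ p j := (Fact.out : 1 ≤ p j)
    have : (p j) ≠ 0 := by
      intro h0; rw [h0] at h1; exact (by norm_num : ¬ ((1:ℝ≥0∞) ≤ 0)) h1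
    exact absurd h' (ENNReal.toReal_pos this hne).ne'
  have hwfin : ∀ j, w j ≠ 0 → 0 < (p j).toReal := by
    intro j h
    have : (p j).toReal ≠ 0 := fun h0 => h (by rw [hw_def]; simp [h0])
    exact lt_of_le_of_ne ENNReal.toReal_nonneg (Ne.symm this)
  -- Key growth estimate
  have key : ∀ n : ℕ, ((n:ℝ)) ^ (1/t) ≤ C * (n:ℝ) ^ (1 - S) := by
    intro n
    -- the diagonal multilinear form
    set Tlin : MultilinearMap ℂ (fun j : Fin m => PiLp (p j) fun _ : Fin n => ℂ) ℂ :=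
      ∑ i : Fin n, (MultilinearMap.mkPiAlgebra ℂ (Fin m) ℂ).compLinearMap
        (fun j => (LinearMap.proj i).comp (WithLp.linearEquiv (p j) ℂ (Fin n → ℂ)).toLinearMap)
      with hTlin
    have hTapp : ∀ x, Tlin x = ∑ i : Fin n, ∏ j, x j i := by
      intro x
      rw [hTlin, MultilinearMap.sum_apply]
      rfl
    have hbound : ∀ x : (∀ j : Fin m, PiLp (p j) fun _ : Fin n => ℂ),
        ‖Tlin x‖ ≤ (n:ℝ) ^ (1 - S) * ∏ j, ‖x j‖ := by
      intro x
      rw [hTapp]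
      calc ‖∑ i : Fin n, ∏ j, x j i‖ ≤ ∑ i : Fin n, ‖∏ j, x j i‖ := norm_sum_le _ _
        _ = ∑ i : Fin n, ∏ j, ‖x j i‖ := by
            exact Finset.sum_congr rfl fun i _ => norm_prod _ _
        _ ≤ (n:ℝ) ^ (1 - S) * ∏ j, ‖x j‖ := by
            refine holder_aux w hw S hwS hS2 (fun j i => ‖x j i‖)
              (fun j i => norm_nonneg _) (fun j => ‖x j‖) (fun j => norm_nonneg _) ?_ ?_
            · intro j hj i
              exact pilp_apply_le_norm (hwinf j hj) (x j) i
            · intro j hj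
              have hq : 0 < (p j).toReal := hwfin j hj
              have hinv : (w j)⁻¹ = (p j).toReal := by rw [hw_def]; simp
              rw [hinv]
              have hxnorm : ‖x j‖ ^ (p j).toReal = ∑ i, ‖x j i‖ ^ (p j).toReal := by
                rw [PiLp.norm_eq_sum hq (x j), ← Real.rpow_mul
                  (Finset.sum_nonneg fun i _ => Real.rpow_nonneg (norm_nonneg _) _),
                  one_div, inv_mul_cancel₀ hq.ne', Real.rpow_one]
              exact le_of_eq hxnorm.symm
    set T : ContinuousMultilinearMap ℂ (fun j : Fin m => PiLp (p j) fun _ : Fin n => ℂ) ℂ :=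
      Tlin.mkContinuous ((n:ℝ) ^ (1 - S)) hbound with hT
    have hTnorm : ‖T‖ ≤ (n:ℝ) ^ (1 - S) :=
      Tlin.mkContinuous_norm_le (Real.rpow_nonneg (Nat.cast_nonneg n) _) hbound
    have hTx : ∀ x, T x = Tlin x := fun x => rfl
    have hTconst : ∀ c : Fin n,
        T (fun j => (WithLp.equiv (p j) (Fin n → ℂ)).symm (Pi.single c 1)) = 1 := by
      intro c
      rw [hTx, hTapp]
      have h1 : ∀ i : Fin n, (∏ _j : Fin m, Pi.single (M := fun _ : Fin n => ℂ) c 1 i)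
          = if i = c then (1:ℂ) else 0 := by
        intro i
        rcases eq_or_ne i c with rfl | h
        · simp
        · simp [Finset.prod_const, Pi.single_apply, h, zero_pow hm.ne']
      simp only [WithLp.equiv_symm_apply, WithLp.ofLp_toLp]
      exact Eq.trans (Finset.sum_congr rfl fun i _ => h1 i) (by simp)
    have hmain : (n:ℝ) ≤ ∑ k : Fin m → Fin n,
        ‖T (fun j => (WithLp.equiv (p j) (Fin n → ℂ)).symm (Pi.single (k j) 1))‖ ^ t := by
      set F : (Fin m → Fin n) → ℝ := fun k =>
        ‖T (fun j => (WithLp.equiv (p j) (Fin n → ℂ)).symm (Pi.single (k j) 1))‖ ^ t with hF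
      have hFnn : ∀ k, 0 ≤ F k := fun k => Real.rpow_nonneg (norm_nonneg _) _
      set Φ : Fin n → (Fin m → Fin n) := fun c _ => c with hΦdef
      have hFconst : ∀ c : Fin n, F (Φ c) = 1 := by
        intro c
        have h3 : F (Φ c) = ‖T (fun j => (WithLp.equiv (p j) (Fin n → ℂ)).symm
            (Pi.single c 1))‖ ^ t := rfl
        rw [h3, hTconst c, norm_one, Real.one_rpow]
      calc (n:ℝ) = ∑ c : Fin n, F (Φ c) := by
            rw [Finset.sum_congr rfl fun c _ => hFconst c]
            simp
        _ = ∑ k ∈ Finset.image Φ univ, F k :=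
            (Finset.sum_image (f := F) (g := Φ) (fun a _ b _ h => congrFun h ⟨0, hm⟩)).symm
        _ ≤ ∑ k : Fin m → Fin n, F k :=
            Finset.sum_le_sum_of_subset_of_nonneg (Finset.subset_univ _)
              (fun k _ _ => hFnn k)
    have hstep := Real.rpow_le_rpow (Nat.cast_nonneg n) hmain
      (le_of_lt (by positivity : (0:ℝ) < 1/t))
    exact le_trans hstep (le_trans (hineq n T) (mul_le_mul_of_nonneg_left hTnorm hC.le))
  -- deduce 1/t ≤ 1 - S
  have hle : 1 / t ≤ 1 - S := by
    by_contra hcon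
    push_neg at hcon
    set ε := 1 / t - (1 - S) with hε_def
    have hε : 0 < ε := by rw [hε_def]; linarith
    have hpow : ∀ n : ℕ, 1 ≤ n → ((n:ℝ)) ^ ε ≤ C := by
      intro n hn
      have hn' : (0:ℝ) < n := by exact_mod_cast hn
      have := key n
      rw [show (1/t) = ε + (1 - S) by simp [hε_def], Real.rpow_add hn'] at this
      have hpos : (0:ℝ) < (n:ℝ) ^ (1 - S) := Real.rpow_pos_of_pos hn' _
      calc ((n:ℝ)) ^ ε = ((n:ℝ) ^ ε * (n:ℝ) ^ (1 - S)) / (n:ℝ) ^ (1 - S) := by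
            field_simp
        _ ≤ (C * (n:ℝ) ^ (1 - S)) / (n:ℝ) ^ (1 - S) :=
            div_le_div_of_nonneg_right this hpos.le
        _ = C := by field_simp
    set n := ⌈C ^ (1/ε)⌉₊ + 1 with hn_def
    have h1 : C ^ (1/ε) < (n:ℝ) := by
      rw [hn_def]
      push_cast
      calc C ^ (1/ε) ≤ ⌈C ^ (1/ε)⌉₊ := Nat.le_ceil _
        _ < (⌈C ^ (1/ε)⌉₊ : ℝ) + 1 := by linarith
    have h2 : C < (n:ℝ) ^ ε := by
      have := Real.rpow_lt_rpow (Real.rpow_nonneg hC.le _) h1 hε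
      rwa [← Real.rpow_mul hC.le, one_div, inv_mul_cancel₀ hε.ne',
        Real.rpow_one] at this
    exact absurd (hpow n (Nat.le_add_left 1 _)) (not_le.2 h2)
  -- conclude
  rw [hlam]
  have h1t : (0:ℝ) < 1 / t := by positivity
  calc (1 - S)⁻¹ ≤ (1/t)⁻¹ := by
        exact inv_anti₀ h1t hle
    _ = t := by rw [one_div, inv_inv]
end

section
/- Let $2 < p_1, \dots, p_m \le \infty$ with $\frac{1}{p_1} + \cdots + \frac{1}{p_m} < \frac{1}{2}$ and $\frac{1}{\lambda} = 1 - (\frac{1}{p_1} + \cdots + \frac{1}{p_m})$. There is a constant $K > 0$ such that for every $n$ there is a choice of signs $\varepsilon_{i_1,\dots,i_m} \in \{+1,-1\}$ for which the $m$-linear form $T : \ell_{p_1}^n \times \cdots \times \ell_{p_m}^n \to \mathbb{C}$ with coefficients $\varepsilon_{i_1,\dots,i_m}$ satisfies $\|T\| \le K\, n^{\frac{1}{\lambda} + \frac{m-1}{2}}$. -/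
open scoped ENNReal Classical


open Finset

/-- Finite Chernoff bound for Rademacher sums. -/
lemma ksz_chernoff {I : Type*} [Fintype I] [DecidableEq I] (c : I → ℝ) {σ t : ℝ}
    (hσ : ∑ i, c i ^ 2 ≤ σ) (hσ0 : 0 < σ) (ht : 0 ≤ t) :
    ((Finset.univ.filter fun ω : I → Bool =>
        t ≤ ∑ i, (if ω i then c i else -(c i))).card : ℝ)
      ≤ Real.exp (-(t ^ 2) / (2 * σ)) * 2 ^ Fintype.card I := by
  classical
  set s : ℝ := t / σ with hs
  have hs0 : 0 ≤ s := div_nonneg ht hσ0.le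
  have key : ∑ ω : I → Bool, Real.exp (s * ∑ i, (if ω i then c i else -(c i)))
      ≤ Real.exp (s ^ 2 * σ / 2) * 2 ^ Fintype.card I := by
    calc ∑ ω : I → Bool, Real.exp (s * ∑ i, (if ω i then c i else -(c i)))
        = ∑ ω : I → Bool, ∏ i, Real.exp (s * (if ω i then c i else -(c i))) := by
          exact Finset.sum_congr rfl fun ω _ => by rw [Finset.mul_sum, Real.exp_sum]
      _ = ∏ i, ∑ b : Bool, Real.exp (s * (if b then c i else -(c i))) := by
          rw [Finset.prod_univ_sum, Fintype.piFinset_univ]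
      _ = ∏ i, 2 * Real.cosh (s * c i) := by
          refine Finset.prod_congr rfl fun i _ => ?_
          rw [Fintype.sum_bool, if_pos rfl, if_neg (by simp), Real.cosh_eq, mul_neg]
          ring
      _ ≤ ∏ i, 2 * Real.exp ((s * c i) ^ 2 / 2) := by
          refine Finset.prod_le_prod (fun i _ => by positivity) fun i _ => ?_
          have := Real.cosh_le_exp_half_sq (s * c i)
          nlinarith
      _ = 2 ^ Fintype.card I * Real.exp (∑ i, (s * c i) ^ 2 / 2) := by
          rw [Finset.prod_mul_distrib, Finset.prod_const, Real.exp_sum]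
          simp [Finset.card_univ]
      _ ≤ 2 ^ Fintype.card I * Real.exp (s ^ 2 * σ / 2) := by
          have h1 : ∑ i, (s * c i) ^ 2 / 2 = s ^ 2 * (∑ i, c i ^ 2) / 2 := by
            rw [Finset.mul_sum, Finset.sum_div]
            exact Finset.sum_congr rfl fun i _ => by ring
          gcongr
          rw [h1]
          have h2 : s ^ 2 * (∑ i, c i ^ 2) ≤ s ^ 2 * σ := by nlinarith [sq_nonneg s]
          linarith
      _ = Real.exp (s ^ 2 * σ / 2) * 2 ^ Fintype.card I := by ring
  have lower : ((Finset.univ.filter fun ω : I → Bool =>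
        t ≤ ∑ i, (if ω i then c i else -(c i))).card : ℝ) * Real.exp (s * t)
      ≤ ∑ ω : I → Bool, Real.exp (s * ∑ i, (if ω i then c i else -(c i))) := by
    have h1 : ((Finset.univ.filter fun ω : I → Bool =>
        t ≤ ∑ i, (if ω i then c i else -(c i))).card : ℝ) * Real.exp (s * t)
        = ∑ ω ∈ (Finset.univ.filter fun ω : I → Bool =>
            t ≤ ∑ i, (if ω i then c i else -(c i))), Real.exp (s * t) := by
      rw [Finset.sum_const, nsmul_eq_mul]
    rw [h1]
    refine le_trans (Finset.sum_le_sum fun ω hω => ?_)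
      (Finset.sum_le_sum_of_subset_of_nonneg (Finset.filter_subset _ _)
        (fun ω _ _ => (Real.exp_pos _).le))
    have := (Finset.mem_filter.1 hω).2
    exact Real.exp_le_exp.2 (by nlinarith)
  have harith : s ^ 2 * σ / 2 - s * t = -(t ^ 2) / (2 * σ) := by
    rw [hs]; field_simp; ring
  have hexp : Real.exp (s ^ 2 * σ / 2) = Real.exp (-(t ^ 2) / (2 * σ)) * Real.exp (s * t) := by
    rw [← Real.exp_add, ← harith]; ring_nf
  have hfin := lower.trans key
  rw [hexp] at hfin
  have hpos : (0:ℝ) < Real.exp (s * t) := Real.exp_pos _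
  have := (mul_le_mul_iff_of_pos_right hpos).1 (by linarith [hfin] :
    ((Finset.univ.filter fun ω : I → Bool =>
        t ≤ ∑ i, (if ω i then c i else -(c i))).card : ℝ) * Real.exp (s * t)
      ≤ (Real.exp (-(t ^ 2) / (2 * σ)) * 2 ^ Fintype.card I) * Real.exp (s * t))
  exact this

section signs
variable {I : Type*} [Fintype I] [DecidableEq I] {α : Type*} [DecidableEq α]

/-- Selection of good signs by union bound. -/
lemma ksz_exists_signs (A : Finset α) (c : α → I → ℂ) {σ t : ℝ}
    (hσ : ∀ a ∈ A, ∑ i, ‖c a i‖ ^ 2 ≤ σ) (hσ0 : 0 < σ) (ht : 0 ≤ t)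
    (hcard : 4 * A.card * Real.exp (-(t ^ 2) / (4 * σ)) < 1) :
    ∃ ε : I → ℝ, (∀ i, ε i = 1 ∨ ε i = -1) ∧
      ∀ a ∈ A, ‖∑ i, (ε i : ℂ) * c a i‖ ≤ t := by
  classical
  set t' : ℝ := t / Real.sqrt 2 with ht'
  have ht'0 : 0 ≤ t' := div_nonneg ht (Real.sqrt_nonneg 2)
  -- the four real coefficient families
  set Bad : α → Finset (I → Bool) := fun a =>
    Finset.univ.filter fun ω => t < ‖∑ i, ((if ω i then (1:ℝ) else -1 : ℝ) : ℂ) * c a i‖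
  have badcard : ∀ a ∈ A, ((Bad a).card : ℝ)
      ≤ 4 * Real.exp (-(t ^ 2) / (4 * σ)) * 2 ^ Fintype.card I := by
    intro a ha
    set cr : I → ℝ := fun i => (c a i).re
    set ci : I → ℝ := fun i => (c a i).im
    have hsub : Bad a ⊆
        (Finset.univ.filter fun ω : I → Bool => t' ≤ ∑ i, (if ω i then cr i else -(cr i)))
        ∪ (Finset.univ.filter fun ω : I → Bool => t' ≤ ∑ i, (if ω i then -(cr i) else -(-(cr i))))
        ∪ (Finset.univ.filter fun ω : I → Bool => t' ≤ ∑ i, (if ω i then ci i else -(ci i)))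
        ∪ (Finset.univ.filter fun ω : I → Bool => t' ≤ ∑ i, (if ω i then -(ci i) else -(-(ci i)))) := by
      intro ω hω
      have hω' := (Finset.mem_filter.1 hω).2
      set z : ℂ := ∑ i, ((if ω i then (1:ℝ) else -1 : ℝ) : ℂ) * c a i with hz
      have hre : z.re = ∑ i, (if ω i then cr i else -(cr i)) := by
        rw [hz, Complex.re_sum]
        refine Finset.sum_congr rfl fun i _ => ?_
        by_cases h : ω i <;> simp [h, cr]
      have him : z.im = ∑ i, (if ω i then ci i else -(ci i)) := by
        rw [hz, Complex.im_sum]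
        refine Finset.sum_congr rfl fun i _ => ?_
        by_cases h : ω i <;> simp [h, ci]
      have habs : t ^ 2 < z.re ^ 2 + z.im ^ 2 := by
        have h1 : ‖z‖ ^ 2 = z.re ^ 2 + z.im ^ 2 := by
          rw [Complex.sq_norm, Complex.normSq_apply]; ring
        nlinarith [hω', norm_nonneg z]
      have hcases : t' ≤ |z.re| ∨ t' ≤ |z.im| := by
        by_contra hcon
        push_neg at hcon
        have h2 : (0:ℝ) < 2 := by norm_num
        have hsq : t' ^ 2 = t ^ 2 / 2 := by
          rw [ht', div_pow, Real.sq_sqrt h2.le]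
        nlinarith [abs_nonneg z.re, abs_nonneg z.im, sq_abs z.re, sq_abs z.im,
          hcon.1, hcon.2, ht'0]
      simp only [Finset.mem_union, Finset.mem_filter, Finset.mem_univ, true_and]
      rcases hcases with h | h
      · rcases le_abs.mp h with h' | h'
        · exact Or.inl (Or.inl (Or.inl (by rw [← hre]; exact h')))
        · refine Or.inl (Or.inl (Or.inr ?_))
          have : -z.re = ∑ i, (if ω i then -(cr i) else -(-(cr i))) := by
            rw [hre, ← Finset.sum_neg_distrib]
            exact Finset.sum_congr rfl fun i _ => by by_cases hh : ω i <;> simp [hh]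
          rw [← this]; linarith
      · rcases le_abs.mp h with h' | h'
        · exact Or.inl (Or.inr (by rw [← him]; exact h'))
        · refine Or.inr ?_
          have : -z.im = ∑ i, (if ω i then -(ci i) else -(-(ci i))) := by
            rw [him, ← Finset.sum_neg_distrib]
            exact Finset.sum_congr rfl fun i _ => by by_cases hh : ω i <;> simp [hh]
          rw [← this]; linarith
    have hre2 : ∑ i, cr i ^ 2 ≤ σ := by
      refine le_trans (Finset.sum_le_sum fun i _ => ?_) (hσ a ha)
      have := Complex.abs_re_le_norm (c a i)
      nlinarith [abs_nonneg (c a i).re, norm_nonneg (c a i), sq_abs (c a i).re]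
    have him2 : ∑ i, ci i ^ 2 ≤ σ := by
      refine le_trans (Finset.sum_le_sum fun i _ => ?_) (hσ a ha)
      have := Complex.abs_im_le_norm (c a i)
      nlinarith [abs_nonneg (c a i).im, norm_nonneg (c a i), sq_abs (c a i).im]
    have hnre2 : ∑ i, (-(cr i)) ^ 2 ≤ σ := by simpa using hre2
    have hnim2 : ∑ i, (-(ci i)) ^ 2 ≤ σ := by simpa using him2
    have hexp : Real.exp (-(t' ^ 2) / (2 * σ)) = Real.exp (-(t ^ 2) / (4 * σ)) := by
      have heq : -(t' ^ 2) / (2 * σ) = -(t ^ 2) / (4 * σ) := by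
        rw [ht', div_pow, Real.sq_sqrt (by norm_num : (0:ℝ) ≤ 2)]
        have hσ' : σ ≠ 0 := hσ0.ne'
        field_simp
        ring_nf
      rw [heq]
    have b1 := ksz_chernoff cr hre2 hσ0 ht'0
    have b2 := ksz_chernoff (fun i => -(cr i)) hnre2 hσ0 ht'0
    have b3 := ksz_chernoff ci him2 hσ0 ht'0
    have b4 := ksz_chernoff (fun i => -(ci i)) hnim2 hσ0 ht'0
    rw [hexp] at b1 b2 b3 b4
    have hcard4 : ((Bad a).card : ℝ) ≤
        ((Finset.univ.filter fun ω : I → Bool => t' ≤ ∑ i, (if ω i then cr i else -(cr i))).card : ℝ)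
        + ((Finset.univ.filter fun ω : I → Bool => t' ≤ ∑ i, (if ω i then -(cr i) else -(-(cr i)))).card : ℝ)
        + ((Finset.univ.filter fun ω : I → Bool => t' ≤ ∑ i, (if ω i then ci i else -(ci i))).card : ℝ)
        + ((Finset.univ.filter fun ω : I → Bool => t' ≤ ∑ i, (if ω i then -(ci i) else -(-(ci i)))).card : ℝ) := by
      have := Finset.card_le_card hsub
      have h1 := Finset.card_union_le
        ((Finset.univ.filter fun ω : I → Bool => t' ≤ ∑ i, (if ω i then cr i else -(cr i)))
        ∪ (Finset.univ.filter fun ω : I → Bool => t' ≤ ∑ i, (if ω i then -(cr i) else -(-(cr i))))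
        ∪ (Finset.univ.filter fun ω : I → Bool => t' ≤ ∑ i, (if ω i then ci i else -(ci i))))
        (Finset.univ.filter fun ω : I → Bool => t' ≤ ∑ i, (if ω i then -(ci i) else -(-(ci i))))
      have h2 := Finset.card_union_le
        ((Finset.univ.filter fun ω : I → Bool => t' ≤ ∑ i, (if ω i then cr i else -(cr i)))
        ∪ (Finset.univ.filter fun ω : I → Bool => t' ≤ ∑ i, (if ω i then -(cr i) else -(-(cr i)))))
        (Finset.univ.filter fun ω : I → Bool => t' ≤ ∑ i, (if ω i then ci i else -(ci i)))
      have h3 := Finset.card_union_le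
        (Finset.univ.filter fun ω : I → Bool => t' ≤ ∑ i, (if ω i then cr i else -(cr i)))
        (Finset.univ.filter fun ω : I → Bool => t' ≤ ∑ i, (if ω i then -(cr i) else -(-(cr i))))
      have hnat := le_trans this (le_trans h1 (Nat.add_le_add_right (le_trans h2 (Nat.add_le_add_right h3 _)) _))
      push_cast
      exact_mod_cast hnat
    calc ((Bad a).card : ℝ) ≤ _ := hcard4
      _ ≤ 4 * Real.exp (-(t ^ 2) / (4 * σ)) * 2 ^ Fintype.card I := by
          have := b1; have := b2; have := b3; have := b4
          linarith
  -- union bound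
  have total : ((A.biUnion Bad).card : ℝ) < ((Finset.univ : Finset (I → Bool)).card : ℝ) := by
    have h1 : ((A.biUnion Bad).card : ℝ) ≤ ∑ a ∈ A, ((Bad a).card : ℝ) := by
      exact_mod_cast Finset.card_biUnion_le
    have h2 : ∑ a ∈ A, ((Bad a).card : ℝ)
        ≤ A.card * (4 * Real.exp (-(t ^ 2) / (4 * σ)) * 2 ^ Fintype.card I) := by
      calc ∑ a ∈ A, ((Bad a).card : ℝ) ≤ ∑ a ∈ A, (4 * Real.exp (-(t ^ 2) / (4 * σ)) * 2 ^ Fintype.card I) :=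
            Finset.sum_le_sum badcard
        _ = A.card * (4 * Real.exp (-(t ^ 2) / (4 * σ)) * 2 ^ Fintype.card I) := by
            rw [Finset.sum_const, nsmul_eq_mul]
    have h3 : ((Finset.univ : Finset (I → Bool)).card : ℝ) = 2 ^ Fintype.card I := by
      rw [Finset.card_univ, Fintype.card_fun]
      push_cast
      simp
    rw [h3]
    have hp : (0:ℝ) < 2 ^ Fintype.card I := by positivity
    calc ((A.biUnion Bad).card : ℝ) ≤ _ := le_trans h1 h2
      _ < 2 ^ Fintype.card I := by nlinarith [hcard, hp]
  obtain ⟨ω, hω⟩ : ∃ ω : I → Bool, ω ∉ A.biUnion Bad := by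
    by_contra hcon
    push_neg at hcon
    have : (Finset.univ : Finset (I → Bool)) ⊆ A.biUnion Bad := fun ω _ => hcon ω
    have hle := Finset.card_le_card this
    have : ((Finset.univ : Finset (I → Bool)).card : ℝ) ≤ ((A.biUnion Bad).card : ℝ) := by
      exact_mod_cast hle
    linarith
  refine ⟨fun i => if ω i then 1 else -1, fun i => by by_cases h : ω i <;> simp [h], ?_⟩
  intro a ha
  by_contra hcon
  push_neg at hcon
  exact hω (Finset.mem_biUnion.2 ⟨a, ha, Finset.mem_filter.2 ⟨Finset.mem_univ _, by
    simpa using hcon⟩⟩)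

end signs


open Finset Metric MeasureTheory Module
open scoped ENNReal

/-- A `δ`-net of the unit ball of cardinality at most `(4/δ)^dim`. -/
lemma ksz_exists_net (E : Type*) [NormedAddCommGroup E] [NormedSpace ℝ E]
    [FiniteDimensional ℝ E] {δ : ℝ} (hδ0 : 0 < δ) (hδ1 : δ ≤ 1) :
    ∃ F : Finset E, (∀ y ∈ F, ‖y‖ ≤ 1) ∧
      ((F.card : ℝ) ≤ (4 / δ) ^ (finrank ℝ E)) ∧
      ∀ x : E, ‖x‖ ≤ 1 → ∃ y ∈ F, ‖x - y‖ ≤ δ := by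
  classical
  borelize E
  set d := finrank ℝ E with hd
  set μ : Measure E := (finBasis ℝ E).addHaar with hμ
  haveI : ProperSpace E := FiniteDimensional.proper ℝ E
  have hU0 : μ (ball (0:E) 1) ≠ 0 := (measure_ball_pos μ 0 one_pos).ne'
  have hUtop : μ (ball (0:E) 1) ≠ ⊤ := measure_ball_lt_top.ne
  -- volume bound for separated sets
  have volbound : ∀ G : Finset E, (∀ y ∈ G, ‖y‖ ≤ 1) →
      ((G : Set E).Pairwise fun a b => δ ≤ ‖a - b‖) → (G.card : ℝ) ≤ (4 / δ) ^ d := by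
    intro G hG hsep
    have hdisj : (G : Set E).PairwiseDisjoint fun y => ball y (δ / 2) := by
      intro a ha b hb hab
      refine Set.disjoint_left.2 fun z hza hzb => ?_
      have h1 : dist z a < δ / 2 := mem_ball.1 hza
      have h2 : dist z b < δ / 2 := mem_ball.1 hzb
      have h3 : δ ≤ ‖a - b‖ := hsep ha hb hab
      have : dist a b < δ := by
        calc dist a b ≤ dist a z + dist z b := dist_triangle a z b
          _ < δ / 2 + δ / 2 := by rw [dist_comm a z]; linarith
          _ = δ := by ring
      rw [dist_eq_norm] at this
      linarith
    have hsum : ∑ y ∈ G, μ (ball y (δ / 2)) ≤ μ (ball (0:E) 2) := by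
      rw [← measure_biUnion_finset hdisj fun y _ => measurableSet_ball]
      refine measure_mono ?_
      intro z hz
      simp only [Set.mem_iUnion, mem_coe] at hz
      obtain ⟨y, hyG, hzy⟩ := hz
      have h1 : dist z y < δ / 2 := mem_ball.1 hzy
      have h2 : ‖y‖ ≤ 1 := hG y hyG
      have : ‖z‖ < 2 := by
        calc ‖z‖ ≤ ‖y‖ + ‖z - y‖ := norm_le_insert' z y
          _ < 1 + δ / 2 := by rw [← dist_eq_norm] at *; linarith
          _ ≤ 2 := by linarith
      simpa [mem_ball, dist_eq_norm] using this
    have hval : ∀ y : E, μ (ball y (δ / 2)) = ENNReal.ofReal ((δ / 2) ^ d) * μ (ball (0:E) 1) :=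
      fun y => by rw [Measure.addHaar_ball_of_pos μ y (by linarith : (0:ℝ) < δ / 2)]
    have hval2 : μ (ball (0:E) 2) = ENNReal.ofReal (2 ^ d) * μ (ball (0:E) 1) := by
      rw [Measure.addHaar_ball_of_pos μ 0 (by norm_num : (0:ℝ) < 2)]
    rw [hval2] at hsum
    have hsum2 : (G.card : ℝ≥0∞) * (ENNReal.ofReal ((δ / 2) ^ d)) * μ (ball (0:E) 1)
        ≤ ENNReal.ofReal (2 ^ d) * μ (ball (0:E) 1) := by
      calc (G.card : ℝ≥0∞) * (ENNReal.ofReal ((δ / 2) ^ d)) * μ (ball (0:E) 1)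
          = ∑ y ∈ G, ENNReal.ofReal ((δ / 2) ^ d) * μ (ball (0:E) 1) := by
            rw [Finset.sum_const, nsmul_eq_mul, mul_assoc]
        _ = ∑ y ∈ G, μ (ball y (δ / 2)) := by
            exact (Finset.sum_congr rfl fun y _ => (hval y).symm)
        _ ≤ _ := hsum
    have hmul := ENNReal.mul_le_mul_iff_left hU0 hUtop |>.1 hsum2
    -- transfer to ℝ
    have hofreal : ENNReal.ofReal ((G.card : ℝ) * (δ / 2) ^ d) ≤ ENNReal.ofReal (2 ^ d) := by
      calc ENNReal.ofReal ((G.card : ℝ) * (δ / 2) ^ d)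
          = (G.card : ℝ≥0∞) * ENNReal.ofReal ((δ / 2) ^ d) := by
            rw [ENNReal.ofReal_mul (by positivity)]
            congr 1
            exact ENNReal.ofReal_natCast _
        _ ≤ ENNReal.ofReal (2 ^ d) := hmul
    have hreal : (G.card : ℝ) * (δ / 2) ^ d ≤ 2 ^ d := by
      have := (ENNReal.ofReal_le_ofReal_iff (by positivity)).1 hofreal
      exact this
    have hpow : (0:ℝ) < (δ / 2) ^ d := by positivity
    have h4 : ((4:ℝ) / δ) ^ d * (δ / 2) ^ d = 2 ^ d := by
      rw [← mul_pow]
      congr 1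
      field_simp
      ring
    refine (mul_le_mul_iff_of_pos_right hpow).1 ?_
    rw [h4]
    exact hreal
  -- maximal separated set
  set B : ℕ := Nat.floor ((4 / δ) ^ d) with hB
  have hbound : ∀ G : Finset E, (∀ y ∈ G, ‖y‖ ≤ 1) →
      ((G : Set E).Pairwise fun a b => δ ≤ ‖a - b‖) → G.card ≤ B := fun G h1 h2 =>
    Nat.le_floor (volbound G h1 h2)
  set 𝒮 : Set ℕ := {k | ∃ G : Finset E, (∀ y ∈ G, ‖y‖ ≤ 1) ∧
      ((G : Set E).Pairwise fun a b => δ ≤ ‖a - b‖) ∧ G.card = k} with h𝒮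
  have h0 : 0 ∈ 𝒮 := ⟨∅, by simp, by simp, rfl⟩
  have hbdd : BddAbove 𝒮 := ⟨B, fun k hk => by
    obtain ⟨G, h1, h2, h3⟩ := hk
    exact h3 ▸ hbound G h1 h2⟩
  have hmax := Nat.sSup_mem ⟨0, h0⟩ hbdd
  obtain ⟨G, hG1, hG2, hG3⟩ := hmax
  refine ⟨G, hG1, volbound G hG1 hG2, ?_⟩
  intro x hx
  by_contra hcon
  push_neg at hcon
  have hcon' : ∀ y ∈ G, δ < ‖x - y‖ := fun y hy => hcon y hy
  have hxG : x ∉ G := fun h => by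
    have := hcon' x h
    simp only [sub_self, norm_zero] at this
    linarith
  have hsym : Symmetric fun a b : E => δ ≤ ‖a - b‖ := by
    intro a b h
    show δ ≤ ‖b - a‖
    rw [norm_sub_rev b a]
    exact h
  have hsep' : ((insert x G : Finset E) : Set E).Pairwise fun a b => δ ≤ ‖a - b‖ := by
    rw [Finset.coe_insert]
    haveI : Std.Symm (fun a b : E => δ ≤ ‖a - b‖) := ⟨fun a b h => hsym h⟩
    rw [Set.pairwise_insert_of_symm]
    exact ⟨hG2, fun b hb _ => (hcon' b hb).le⟩
  have hmem : (insert x G).card ∈ 𝒮 := ⟨insert x G, fun y hy => by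
      rcases Finset.mem_insert.1 hy with rfl | hy
      · exact hx
      · exact hG1 y hy, hsep', rfl⟩
  have hle : (insert x G).card ≤ sSup 𝒮 := le_csSup hbdd hmem
  rw [Finset.card_insert_of_notMem hxG, hG3] at hle
  omega


open Finset
open scoped ENNReal NNReal

lemma ksz_l2_sum {n : ℕ} (p : ℝ≥0∞) [Fact (1 ≤ p)] (hp2 : 2 < p)
    (y : PiLp p fun _ : Fin n => ℂ) (hy : ‖y‖ ≤ 1) :
    ∑ i, ‖y i‖ ^ 2 ≤ (n : ℝ) ^ (1 - 2 * (p.toReal)⁻¹) := by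
  have habs : ∀ i, ‖y i‖ = ((‖y i‖₊ : ℝ)) := fun i => rfl
  by_cases hptop : p = ∞
  · subst hptop
    have hcoord : ∀ i, ‖y i‖ ≤ 1 := by
      intro i
      refine le_trans ?_ hy
      rw [PiLp.norm_eq_ciSup]
      exact le_ciSup (f := fun i => ‖y i‖) (Set.Finite.bddAbove (Set.finite_range _)) i
    have hexp : 1 - 2 * (((⊤:ℝ≥0∞)).toReal)⁻¹ = 1 := by simp
    rw [hexp, Real.rpow_one]
    calc ∑ i, ‖y i‖ ^ 2 ≤ ∑ _i : Fin n, (1:ℝ) := by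
          refine Finset.sum_le_sum fun i _ => ?_
          have h1 : ‖y i‖ ≤ 1 := hcoord i
          nlinarith [norm_nonneg (y i)]
      _ = (n : ℝ) := by simp
  · set q : ℝ := p.toReal with hq
    have hq2 : 2 < q := by
      rw [hq, ← ENNReal.toReal_ofNat 2]
      exact (ENNReal.toReal_lt_toReal (by simp) hptop).2 hp2
    have hq0 : 0 < q := by linarith
    set P : ℝ := q / 2 with hP
    have hP1 : 1 ≤ P := by rw [hP]; linarith
    have key := NNReal.inner_le_weight_mul_Lp Finset.univ hP1 (fun _ => 1)
      (fun i => ‖y i‖₊ ^ 2)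
    simp only [one_mul, Finset.sum_const, Finset.card_univ, Fintype.card_fin, nsmul_eq_mul,
      mul_one] at key
    have hsumq : ∑ i, ((‖y i‖₊ ^ 2 : ℝ≥0)) ^ P = ‖y‖₊ ^ q := by
      have h1 : ∀ i, ((‖y i‖₊ ^ 2 : ℝ≥0)) ^ P = ‖y i‖₊ ^ q := by
        intro i
        rw [← NNReal.rpow_natCast (‖y i‖₊) 2, ← NNReal.rpow_mul]
        congr 1
        rw [hP]
        push_cast
        ring
      rw [Finset.sum_congr rfl fun i _ => h1 i]
      have h2 := PiLp.nnnorm_eq_sum hptop y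
      rw [h2, ← NNReal.rpow_mul, one_div, inv_mul_cancel₀ hq0.ne', NNReal.rpow_one]
    rw [hsumq] at key
    have hy1 : ‖y‖₊ ≤ 1 := by
      rw [← NNReal.coe_le_coe]
      exact hy
    have h3 : ((‖y‖₊ ^ q)) ^ P⁻¹ ≤ 1 := by
      have hbase : ‖y‖₊ ^ q ≤ 1 := NNReal.rpow_le_one hy1 hq0.le
      exact NNReal.rpow_le_one hbase (by positivity)
    have h4 : ∑ i, (‖y i‖₊ : ℝ≥0) ^ 2 ≤ (n : ℝ≥0) ^ (1 - P⁻¹) := by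
      refine le_trans key ?_
      exact mul_le_of_le_one_right (by positivity) h3
    have h5 : (1 - P⁻¹) = 1 - 2 * q⁻¹ := by
      rw [hP]
      field_simp
    rw [h5] at h4
    have hfinal := NNReal.coe_le_coe.2 h4
    rw [NNReal.coe_rpow] at hfinal
    push_cast at hfinal
    calc ∑ i, ‖y i‖ ^ 2 = ∑ i, ((‖y i‖₊ : ℝ)) ^ 2 := by
          exact Finset.sum_congr rfl fun i _ => by rw [habs]
      _ ≤ (n : ℝ) ^ (1 - 2 * q⁻¹) := hfinal


open Finset
open scoped ENNReal NNReal

lemma ksz_rpow_sum {ι : Type*} (s : Finset ι) {x : ℝ} (hx : 0 < x) (f : ι → ℝ) :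
    x ^ (∑ j ∈ s, f j) = ∏ j ∈ s, x ^ (f j) := by
  rw [Real.rpow_def_of_pos hx, Finset.mul_sum, Real.exp_sum]
  exact Finset.prod_congr rfl fun j _ => (Real.rpow_def_of_pos hx (f j)).symm

lemma ksz_finrank (p : ℝ≥0∞) [Fact (1 ≤ p)] (n : ℕ) :
    Module.finrank ℝ (PiLp p fun _ : Fin n => ℂ) = 2 * n := by
  rw [(WithLp.linearEquiv p ℝ (Fin n → ℂ)).finrank_eq]
  rw [Module.finrank_pi_fintype]
  simp [Complex.finrank_real_complex, mul_comm]

lemma ksz_expand {m n : ℕ} (p : Fin m → ℝ≥0∞) [∀ j, Fact (1 ≤ p j)]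
    (T : ContinuousMultilinearMap ℂ (fun j : Fin m => PiLp (p j) fun _ : Fin n => ℂ) ℂ)
    (x : ∀ j, PiLp (p j) fun _ : Fin n => ℂ) :
    T x = ∑ k : Fin m → Fin n, (∏ j, x j (k j)) •
      T (fun j => (WithLp.equiv (p j) (Fin n → ℂ)).symm (Pi.single (k j) 1)) := by
  classical
  have hx : ∀ j, x j = ∑ i, x j i • (WithLp.equiv (p j) (Fin n → ℂ)).symm (Pi.single i 1) := by
    intro j
    have h1 := (PiLp.basisFun (p j) ℂ (Fin n)).sum_repr (x j)
    calc x j = ∑ i, ((PiLp.basisFun (p j) ℂ (Fin n)).repr (x j)) i •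
          (PiLp.basisFun (p j) ℂ (Fin n)) i := h1.symm
      _ = ∑ i, x j i • (WithLp.equiv (p j) (Fin n → ℂ)).symm (Pi.single i 1) := by
          refine Finset.sum_congr rfl fun i _ => ?_
          rw [PiLp.basisFun_repr, PiLp.basisFun_apply]
          rfl
  have h2 : T x = T (fun j => ∑ i, x j i • (WithLp.equiv (p j) (Fin n → ℂ)).symm (Pi.single i 1)) := by
    congr 1
    funext j
    exact hx j
  rw [h2]
  rw [show (T (fun j => ∑ i, x j i • (WithLp.equiv (p j) (Fin n → ℂ)).symm (Pi.single i 1)))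
      = T.toMultilinearMap (fun j => ∑ i, x j i • (WithLp.equiv (p j) (Fin n → ℂ)).symm (Pi.single i 1)) from rfl]
  rw [T.toMultilinearMap.map_sum]
  refine Finset.sum_congr rfl fun k _ => ?_
  rw [T.toMultilinearMap.map_smul_univ]
  rfl

set_option maxHeartbeats 1000000 in
/-- there is `K > 0` such that for each `n` some choice of signs
`ε_{i₁,…,i_m} = ±1` makes the `m`-linear form on `ℓ_{p₁}ⁿ × ⋯ × ℓ_{p_m}ⁿ` with those
coefficients have norm at most `K n^{1/λ + (m-1)/2}`, where `1/λ = 1 - ∑ 1/p_j`. -/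
theorem stmt9 (m : ℕ) (hm : 0 < m) (p : Fin m → ℝ≥0∞) [∀ j, Fact (1 ≤ p j)]
    (hp2 : ∀ j, (2 : ℝ≥0∞) < p j)
    (S lam : ℝ) (hS : S = ∑ j, ((p j).toReal)⁻¹) (hS2 : S < 1 / 2)
    (hlam : lam = (1 - S)⁻¹) :
    ∃ K > (0 : ℝ), ∀ n : ℕ, ∃ ε : (Fin m → Fin n) → ℝ,
      (∀ k, ε k = 1 ∨ ε k = -1) ∧
      ∀ T : ContinuousMultilinearMap ℂ (fun j : Fin m => PiLp (p j) fun _ : Fin n => ℂ) ℂ,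
        (∀ k : Fin m → Fin n,
          T (fun j => (WithLp.equiv (p j) (Fin n → ℂ)).symm (Pi.single (k j) 1)) = (ε k : ℂ)) →
        ‖T‖ ≤ K * (n : ℝ) ^ (1 / lam + ((m : ℝ) - 1) / 2) := by 
  classical
  have hm1 : (1:ℝ) ≤ m := by exact_mod_cast hm
  set Nc : ℝ := 8 * m with hNc
  have hNc1 : (1:ℝ) ≤ Nc := by rw [hNc]; linarith
  have hNc0 : (0:ℝ) < Nc := by linarith
  have hlogNc : 0 ≤ Real.log Nc := Real.log_nonneg hNc1
  have hargpos : (0:ℝ) < 2 * m * Real.log Nc + 2 := by nlinarith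
  set K₁ : ℝ := 2 * Real.sqrt (2 * m * Real.log Nc + 2) with hK₁def
  have hK₁ : 0 < K₁ := by
    rw [hK₁def]
    have := Real.sqrt_pos.2 hargpos
    linarith
  have hK₁sq : K₁ ^ 2 = 4 * (2 * m * Real.log Nc + 2) := by
    rw [hK₁def, mul_pow, Real.sq_sqrt hargpos.le]
    ring
  have hS0 : 0 ≤ S := by
    rw [hS]
    exact Finset.sum_nonneg fun j _ => inv_nonneg.2 ENNReal.toReal_nonneg
  have hexpo : 1 / lam + ((m:ℝ) - 1) / 2 = ((m:ℝ) + 1) / 2 - S := by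
    rw [hlam, one_div, inv_inv]
    ring
  refine ⟨2 * K₁, by positivity, fun n => ?_⟩
  rcases Nat.eq_zero_or_pos n with rfl | hn
  · -- n = 0 : all maps vanish
    refine ⟨fun _ => 1, fun _ => Or.inl rfl, fun T _ => ?_⟩
    have hT0 : ‖T‖ ≤ 0 := by
      refine T.opNorm_le_bound le_rfl fun x => ?_
      have hx0 : x ⟨0, hm⟩ = 0 := by
        apply (WithLp.equiv (p ⟨0, hm⟩) _).injective
        funext i
        exact i.elim0
      rw [T.map_coord_zero _ hx0]
      simp
    have hrhs : (0:ℝ) ≤ 2 * K₁ * ((0:ℕ) : ℝ) ^ (1 / lam + ((m:ℝ) - 1) / 2) := by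
      have : (0:ℝ) ≤ ((0:ℕ) : ℝ) ^ (1 / lam + ((m:ℝ) - 1) / 2) :=
        Real.rpow_nonneg (by norm_num) _
      nlinarith
    linarith
  -- main case n ≥ 1
  have hn0 : (0:ℝ) < n := by exact_mod_cast hn
  set δ : ℝ := 1 / (2 * m) with hδdef
  have hδ0 : 0 < δ := by rw [hδdef]; positivity
  have hδ1 : δ ≤ 1 := by
    rw [hδdef, div_le_one (by linarith)]
    linarith
  have hnets := fun j : Fin m =>
    ksz_exists_net (PiLp (p j) fun _ : Fin n => ℂ) hδ0 hδ1
  choose F hF1 hF2 hF3 using hnets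
  have hcardF : ∀ j, ((F j).card : ℝ) ≤ Nc ^ (2 * n) := by
    intro j
    refine le_trans (hF2 j) ?_
    rw [ksz_finrank]
    have h4δ : (4 / δ) = Nc := by
      rw [hδdef, hNc]
      field_simp
      ring
    rw [h4δ]
  set A : Finset (∀ j : Fin m, PiLp (p j) fun _ : Fin n => ℂ) := Fintype.piFinset F with hA
  have hcardA : (A.card : ℝ) ≤ Nc ^ (2 * n * m) := by
    rw [hA, Fintype.card_piFinset]
    push_cast
    calc (∏ j, ((F j).card : ℝ)) ≤ ∏ _j : Fin m, Nc ^ (2 * n) :=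
        Finset.prod_le_prod (fun j _ => by positivity) fun j _ => hcardF j
      _ = Nc ^ (2 * n * m) := by
        rw [Finset.prod_const, Finset.card_univ, Fintype.card_fin, ← pow_mul]
  set σ : ℝ := (n:ℝ) ^ ((m:ℝ) - 2 * S) with hσdef
  have hσ0 : 0 < σ := Real.rpow_pos_of_pos hn0 _
  set t : ℝ := K₁ * (n:ℝ) ^ (((m:ℝ) + 1) / 2 - S) with htdef
  have ht0 : 0 ≤ t := by positivity
  set c : (∀ j : Fin m, PiLp (p j) fun _ : Fin n => ℂ) → (Fin m → Fin n) → ℂ :=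
    fun a k => ∏ j, a j (k j) with hc
  -- variance bound
  have hσbound : ∀ a ∈ A, ∑ k : Fin m → Fin n, ‖c a k‖ ^ 2 ≤ σ := by
    intro a ha
    have hmem : ∀ j, a j ∈ F j := fun j => (Fintype.mem_piFinset.1 ha) j
    have h1 : ∀ k : Fin m → Fin n, ‖c a k‖ ^ 2
        = ∏ j, ‖a j (k j)‖ ^ 2 := by
      intro k
      rw [hc]
      simp only
      rw [norm_prod, ← Finset.prod_pow]
    have h2 : ∑ k : Fin m → Fin n, ‖c a k‖ ^ 2
        = ∏ j, ∑ i, ‖a j i‖ ^ 2 := by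
      rw [Finset.sum_congr rfl fun k _ => h1 k]
      rw [Finset.prod_univ_sum]
      rw [Fintype.piFinset_univ]
    rw [h2]
    calc ∏ j, ∑ i, ‖a j i‖ ^ 2
        ≤ ∏ j, (n:ℝ) ^ (1 - 2 * ((p j).toReal)⁻¹) := by
          refine Finset.prod_le_prod (fun j _ => Finset.sum_nonneg fun i _ => by positivity)
            fun j _ => ?_
          exact ksz_l2_sum (p j) (hp2 j) (a j) (hF1 j _ (hmem j))
      _ = σ := by
        rw [hσdef, ← ksz_rpow_sum _ hn0]
        congr 1
        rw [Finset.sum_sub_distrib, Finset.sum_const, Finset.card_univ, Fintype.card_fin,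
          ← Finset.mul_sum, ← hS]
        push_cast
        ring
  -- smallness condition
  have ht2 : t ^ 2 = K₁ ^ 2 * (n:ℝ) ^ ((m:ℝ) + 1 - 2 * S) := by
    rw [htdef, mul_pow]
    congr 1
    rw [← Real.rpow_natCast ((n:ℝ) ^ (((m:ℝ) + 1) / 2 - S)) 2, ← Real.rpow_mul hn0.le]
    congr 1
    push_cast
    ring
  have hdiv : (n:ℝ) ^ ((m:ℝ) + 1 - 2 * S) = (n:ℝ) * σ := by
    rw [hσdef]
    have h : (m:ℝ) + 1 - 2 * S = 1 + ((m:ℝ) - 2 * S) := by ring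
    rw [h, Real.rpow_add hn0, Real.rpow_one]
  have hexpeq : -(t ^ 2) / (4 * σ) = -((2 * m * Real.log Nc + 2) * n) := by
    rw [ht2, hdiv, hK₁sq]
    field_simp
  have hP : (Nc:ℝ) ^ (2 * n * m) * Real.exp (-((2 * m * Real.log Nc + 2) * n))
      = Real.exp (-(2 * (n:ℝ))) := by
    have h1 : (Nc:ℝ) ^ (2 * n * m) = Real.exp (((2 * n * m : ℕ) : ℝ) * Real.log Nc) := by
      rw [Real.exp_nat_mul, Real.exp_log hNc0]
    rw [h1, ← Real.exp_add]
    congr 1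
    push_cast
    ring
  have h41 : Real.exp (-(2:ℝ)) < 1 / 4 := by
    rw [Real.exp_neg]
    have hgt : (4:ℝ) < Real.exp 2 := by
      have h1 : Real.exp 2 = Real.exp 1 * Real.exp 1 := by
        rw [← Real.exp_add]; norm_num
      nlinarith [Real.exp_one_gt_d9]
    rw [inv_lt_comm₀ (by positivity) (by norm_num)]
    linarith
  have hcond : 4 * A.card * Real.exp (-(t ^ 2) / (4 * σ)) < 1 := by
    rw [hexpeq]
    have hE : (0:ℝ) < Real.exp (-((2 * m * Real.log Nc + 2) * n)) := Real.exp_pos _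
    calc 4 * (A.card : ℝ) * Real.exp (-((2 * m * Real.log Nc + 2) * n))
        ≤ 4 * (Nc ^ (2 * n * m)) * Real.exp (-((2 * m * Real.log Nc + 2) * n)) := by
          have h4 : (4:ℝ) * A.card ≤ 4 * Nc ^ (2 * n * m) := by linarith [hcardA]
          exact mul_le_mul_of_nonneg_right h4 hE.le
      _ = 4 * Real.exp (-(2 * (n:ℝ))) := by rw [mul_assoc, hP]
      _ ≤ 4 * Real.exp (-(2:ℝ)) := by
          have hn1 : (1:ℝ) ≤ n := by exact_mod_cast hn
          have : -(2 * (n:ℝ)) ≤ -2 := by linarith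
          nlinarith [Real.exp_le_exp.2 this, Real.exp_pos (-(2:ℝ))]
      _ < 1 := by linarith
  obtain ⟨ε, hε1, hε2⟩ := ksz_exists_signs A c hσbound hσ0 ht0 hcond
  refine ⟨ε, hε1, fun T hT => ?_⟩
  -- values on the net
  have hTnet : ∀ a ∈ A, ‖T a‖ ≤ t := by
    intro a ha
    rw [ksz_expand p T a]
    have heq : ∑ k : Fin m → Fin n, (∏ j, a j (k j)) •
          T (fun j => (WithLp.equiv (p j) (Fin n → ℂ)).symm (Pi.single (k j) 1))
        = ∑ k : Fin m → Fin n, (ε k : ℂ) * c a k := by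
      refine Finset.sum_congr rfl fun k _ => ?_
      rw [hT k, smul_eq_mul, mul_comm, hc]
    rw [heq]
    exact hε2 a ha
  -- bound on the unit ball
  have hball : ∀ x : (∀ j, PiLp (p j) fun _ : Fin n => ℂ), (∀ j, ‖x j‖ ≤ 1) →
      ‖T x‖ ≤ ‖T‖ * (1 / 2) + t := by
    intro x hx
    choose a ha1 ha2 using fun j => hF3 j (x j) (hx j)
    have haA : a ∈ A := Fintype.mem_piFinset.2 ha1
    have hxnorm : ‖x‖ ≤ 1 := (pi_norm_le_iff_of_nonneg zero_le_one).2 hx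
    have hanorm : ‖a‖ ≤ 1 := (pi_norm_le_iff_of_nonneg zero_le_one).2
      fun j => hF1 j _ (ha1 j)
    have hdist : ‖x - a‖ ≤ δ := (pi_norm_le_iff_of_nonneg hδ0.le).2 fun j => by
      rw [Pi.sub_apply]
      exact ha2 j
    have hmax : max ‖x‖ ‖a‖ ^ (Fintype.card (Fin m) - 1) ≤ 1 :=
      pow_le_one₀ (le_max_iff.2 (Or.inl (norm_nonneg _))) (max_le hxnorm hanorm)
    have hsub := T.norm_image_sub_le x a
    have hTnn : (0:ℝ) ≤ ‖T‖ := norm_nonneg T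
    have hcm : (Fintype.card (Fin m) : ℝ) = m := by simp
    have hstep : ‖T x - T a‖ ≤ ‖T‖ * (1 / 2) := by
      have hmδ : (m:ℝ) * δ = 1 / 2 := by
        rw [hδdef]
        field_simp
      calc ‖T x - T a‖ ≤ ‖T‖ * Fintype.card (Fin m) * max ‖x‖ ‖a‖ ^ (Fintype.card (Fin m) - 1)
            * ‖x - a‖ := hsub
        _ ≤ ‖T‖ * (m:ℝ) * 1 * δ := by
            rw [hcm]
            have h1 : (0:ℝ) ≤ ‖T‖ * (m:ℝ) := by positivity
            have h3 : (0:ℝ) ≤ ‖x - a‖ := norm_nonneg _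
            have s1 : ‖T‖ * (m:ℝ) * ((‖x‖ ⊔ ‖a‖) ^ (Fintype.card (Fin m) - 1)) * ‖x - a‖
                ≤ ‖T‖ * (m:ℝ) * 1 * ‖x - a‖ :=
              mul_le_mul_of_nonneg_right (mul_le_mul_of_nonneg_left hmax h1) h3
            have s2 : ‖T‖ * (m:ℝ) * 1 * ‖x - a‖ ≤ ‖T‖ * (m:ℝ) * 1 * δ :=
              mul_le_mul_of_nonneg_left hdist (by positivity)
            linarith
        _ = ‖T‖ * ((m:ℝ) * δ) := by ring
        _ = ‖T‖ * (1 / 2) := by rw [hmδ]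
    calc ‖T x‖ ≤ ‖T a‖ + ‖T x - T a‖ := norm_le_insert' (T x) (T a)
      _ ≤ t + ‖T‖ * (1 / 2) := add_le_add (hTnet a haA) hstep
      _ = ‖T‖ * (1 / 2) + t := by ring
  -- conclude via homogeneity
  have hC0 : (0:ℝ) ≤ ‖T‖ * (1 / 2) + t := by positivity
  have hfin : ‖T‖ ≤ ‖T‖ * (1 / 2) + t := by
    refine T.opNorm_le_bound hC0 fun z => ?_
    by_cases hz : ∀ j, z j ≠ 0
    · set u : ∀ j, PiLp (p j) fun _ : Fin n => ℂ := fun j => ((‖z j‖ : ℂ))⁻¹ • z j with hu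
      have hcast : ∀ j, ((‖z j‖ : ℂ)) ≠ 0 := fun j => by
        simp only [ne_eq, Complex.ofReal_eq_zero, norm_eq_zero]
        exact hz j
      have hunorm : ∀ j, ‖u j‖ = 1 := by
        intro j
        rw [hu]
        simp only
        rw [norm_smul, norm_inv, Complex.norm_real, Real.norm_eq_abs,
          abs_of_nonneg (norm_nonneg _), inv_mul_cancel₀ (norm_ne_zero_iff.2 (hz j))]
      have hzeq : z = fun j => ((‖z j‖ : ℂ)) • u j := by
        funext j
        rw [hu]
        simp only
        rw [smul_inv_smul₀ (hcast j)]
      have hTz : T z = (∏ j, ((‖z j‖ : ℂ))) • T u := by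
        conv_lhs => rw [hzeq]
        exact T.toMultilinearMap.map_smul_univ _ _
      rw [hTz, norm_smul, norm_prod]
      have hnp : ∏ j, ‖((‖z j‖ : ℂ))‖ = ∏ j, ‖z j‖ := by
        refine Finset.prod_congr rfl fun j _ => ?_
        rw [Complex.norm_real, Real.norm_eq_abs, abs_of_nonneg (norm_nonneg _)]
      rw [hnp, mul_comm]
      have hprodnn : (0:ℝ) ≤ ∏ j, ‖z j‖ := Finset.prod_nonneg fun j _ => norm_nonneg _
      exact mul_le_mul_of_nonneg_right (hball u fun j => (hunorm j).le) hprodnn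
    · push_neg at hz
      obtain ⟨j, hj⟩ := hz
      rw [T.map_coord_zero _ hj]
      have : ∏ j', ‖z j'‖ = 0 := Finset.prod_eq_zero (Finset.mem_univ j) (by rw [hj, norm_zero])
      rw [this, norm_zero, mul_zero]
  have hT2t : ‖T‖ ≤ 2 * t := by linarith
  calc ‖T‖ ≤ 2 * t := hT2t
    _ = 2 * K₁ * (n:ℝ) ^ (((m:ℝ) + 1) / 2 - S) := by rw [htdef]; ring
    _ = 2 * K₁ * (n:ℝ) ^ (1 / lam + ((m : ℝ) - 1) / 2) := by rw [hexpo]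
end

section
/- Let $2 \le p_1, \dots, p_m \le \infty$ and $q \ge 2$ with $\frac{1}{p_1} + \cdots + \frac{1}{p_m} < \frac{1}{q}$, and set $\frac{1}{\lambda} = \frac{1}{q} - (\frac{1}{p_1} + \cdots + \frac{1}{p_m})$. For every Banach space $X$ of cotype $q$ there exists $C > 0$ such that every bounded $m$-linear map $T : \ell_{p_1} \times \cdots \times \ell_{p_m} \to X$ with coefficients $a_{i_1,\dots,i_m} = T(e_{i_1},\dots,e_{i_m})$ satisfies $\big( \sum_{i_1,\dots,i_m=1}^\infty \|a_{i_1,\dots,i_m}\|_X^\lambda \big)^{1/\lambda} \le C\|T\|$. -/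
open scoped ENNReal Classical

/-- `Y` has cotype `q` with constant `Cq` (discrete Rademacher average formulation). -/
def HasCotype (q Cq : ℝ) (Y : Type*) [NormedAddCommGroup Y] : Prop :=
  ∀ (N : ℕ) (x : Fin N → Y),
    (∑ k, ‖x k‖ ^ q) ^ (1 / q) ≤
      Cq * ((∑ ε : Fin N → Bool, ‖∑ k, if ε k then x k else -x k‖ ^ 2) / 2 ^ N) ^ ((1 : ℝ) / 2)

noncomputable section

/-- sign of a boolean -/
def sg (b : Bool) : ℝ := if b then 1 else -1

lemma abs_sg (b : Bool) : |sg b| = 1 := by cases b <;> simp [sg]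

lemma sg_smul {Y : Type*} [AddCommGroup Y] [Module ℝ Y] (b : Bool) (y : Y) :
    sg b • y = if b then y else -y := by
  cases b <;> simp [sg]

section Cotype

variable {Y : Type*} [NormedAddCommGroup Y] [NormedSpace ℝ Y] {q Cq : ℝ}

lemma cotype_base (hq : 2 ≤ q) (hCq : 0 ≤ Cq) (hcot : HasCotype q Cq Y) (N : ℕ)
    (x : Fin N → Y) :
    ∑ k, ‖x k‖ ^ q ≤ Cq ^ q * ((∑ ε : Fin N → Bool, ‖∑ k, sg (ε k) • x k‖ ^ q) / 2 ^ N) := by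
  have hq0 : (0:ℝ) < q := by linarith
  have key := hcot N x
  have hE : ∀ ε : Fin N → Bool,
      (∑ k, if ε k then x k else -x k) = ∑ k, sg (ε k) • x k := by
    intro ε
    exact Finset.sum_congr rfl fun k _ => (sg_smul (ε k) (x k)).symm
  simp only [hE] at key
  set A := ∑ k, ‖x k‖ ^ q with hA
  have hA0 : 0 ≤ A := Finset.sum_nonneg fun k _ => Real.rpow_nonneg (norm_nonneg _) _
  set M := (∑ ε : Fin N → Bool, ‖∑ k, sg (ε k) • x k‖ ^ 2) / 2 ^ N with hM
  have hM0 : 0 ≤ M := by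
    apply div_nonneg _ (by positivity)
    exact Finset.sum_nonneg fun ε _ => by positivity
  -- raise to power q
  have h1 : A ≤ (Cq * M ^ ((1:ℝ)/2)) ^ q := by
    have := Real.rpow_le_rpow (Real.rpow_nonneg hA0 _) key hq0.le
    rwa [one_div, Real.rpow_inv_rpow hA0 hq0.ne'] at this
  have h2 : (Cq * M ^ ((1:ℝ)/2)) ^ q = Cq ^ q * M ^ ((1:ℝ)/2 * q) := by
    rw [Real.mul_rpow hCq (Real.rpow_nonneg hM0 _), ← Real.rpow_mul hM0]
  -- Jensen: M ^ (q/2) ≤ average of ‖·‖^q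
  have card2 : (Fintype.card (Fin N → Bool) : ℝ) = 2 ^ N := by
    simp [Fintype.card_fun]
  have hMsum : M = ∑ ε : Fin N → Bool, ((2:ℝ) ^ N)⁻¹ * ‖∑ k, sg (ε k) • x k‖ ^ 2 := by
    rw [hM, Finset.sum_div]
    exact Finset.sum_congr rfl fun ε _ => by ring
  have hjen : M ^ ((1:ℝ)/2 * q) ≤
      (∑ ε : Fin N → Bool, ‖∑ k, sg (ε k) • x k‖ ^ q) / 2 ^ N := by
    have hr : (1:ℝ) ≤ (1:ℝ)/2 * q := by linarith
    have := Real.rpow_arith_mean_le_arith_mean_rpow (Finset.univ)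
      (fun _ : Fin N → Bool => ((2:ℝ) ^ N)⁻¹)
      (fun ε : Fin N → Bool => ‖∑ k, sg (ε k) • x k‖ ^ 2)
      (fun _ _ => by positivity)
      (by rw [Finset.sum_const, Finset.card_univ, nsmul_eq_mul, card2]
          field_simp)
      (fun _ _ => by positivity) hr
    rw [← hMsum] at this
    refine this.trans (le_of_eq ?_)
    rw [Finset.sum_div]
    refine Finset.sum_congr rfl fun ε _ => ?_
    have hnn : (0:ℝ) ≤ ‖∑ k, sg (ε k) • x k‖ := norm_nonneg _
    rw [← Real.rpow_natCast (‖∑ k, sg (ε k) • x k‖) 2, ← Real.rpow_mul hnn]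
    push_cast
    rw [show (2:ℝ) * ((1:ℝ)/2 * q) = q by ring]
    ring
  calc A ≤ Cq ^ q * M ^ ((1:ℝ)/2 * q) := by rw [← h2]; exact h1
    _ ≤ Cq ^ q * ((∑ ε : Fin N → Bool, ‖∑ k, sg (ε k) • x k‖ ^ q) / 2 ^ N) := by
        exact mul_le_mul_of_nonneg_left hjen (Real.rpow_nonneg hCq _)

end Cotype

section Cotype2

variable {Y : Type*} [NormedAddCommGroup Y] [NormedSpace ℝ Y] {q Cq : ℝ}

lemma sum_cons_eq {β : Type*} [Fintype β] {α : Type*} [AddCommMonoid α] {n : ℕ}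
    (f : (Fin (n+1) → β) → α) :
    ∑ i, f i = ∑ a : β, ∑ i' : Fin n → β, f (Fin.cons a i') := by
  have h1 : ∑ i, f i = ∑ x : β × (Fin n → β), f (Fin.cons x.1 x.2) :=
    (Fintype.sum_equiv (Fin.consEquiv fun _ => β) _ _ fun x => rfl).symm
  rw [h1, Fintype.sum_prod_type]

lemma cotype_iter (hq : 2 ≤ q) (hCq : 0 ≤ Cq) (hcot : HasCotype q Cq Y) (m N : ℕ)
    (x : (Fin m → Fin N) → Y) :
    ∑ i, ‖x i‖ ^ q ≤ (Cq ^ q) ^ m *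
      ((∑ ε : Fin m → Fin N → Bool, ‖∑ i, (∏ l, sg (ε l (i l))) • x i‖ ^ q) /
        ((2:ℝ) ^ N) ^ m) := by
  induction m with
  | zero =>
      simp [Fintype.sum_unique]
  | succ m ih =>
      have hCqq : (0:ℝ) ≤ Cq ^ q := Real.rpow_nonneg hCq _
      have h2N : (0:ℝ) < (2:ℝ) ^ N := by positivity
      -- step 1: split off the first coordinate
      have step1 : ∑ i, ‖x i‖ ^ q
          = ∑ i' : Fin m → Fin N, ∑ a : Fin N, ‖x (Fin.cons a i')‖ ^ q := by
        rw [sum_cons_eq (f := fun i => ‖x i‖ ^ q), Finset.sum_comm]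
      -- apply the base inequality in the first coordinate for each i'
      set y : (Fin N → Bool) → (Fin m → Fin N) → Y :=
        fun ε0 i' => ∑ a : Fin N, sg (ε0 a) • x (Fin.cons a i') with hy
      have step2 : ∑ i' : Fin m → Fin N, ∑ a : Fin N, ‖x (Fin.cons a i')‖ ^ q
          ≤ Cq ^ q * ((∑ ε0 : Fin N → Bool, ∑ i' : Fin m → Fin N, ‖y ε0 i'‖ ^ q) / 2 ^ N) := by
        calc ∑ i' : Fin m → Fin N, ∑ a : Fin N, ‖x (Fin.cons a i')‖ ^ q
            ≤ ∑ i' : Fin m → Fin N,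
              (Cq ^ q * ((∑ ε0 : Fin N → Bool, ‖y ε0 i'‖ ^ q) / 2 ^ N)) := by
              refine Finset.sum_le_sum fun i' _ => ?_
              exact cotype_base hq hCq hcot N (fun a => x (Fin.cons a i'))
          _ = Cq ^ q * ((∑ ε0 : Fin N → Bool, ∑ i' : Fin m → Fin N, ‖y ε0 i'‖ ^ q) / 2 ^ N) := by
              rw [← Finset.mul_sum, ← Finset.sum_div, Finset.sum_comm]
      -- apply the induction hypothesis to each y ε0
      have step3 : ∀ ε0 : Fin N → Bool,
          ∑ i' : Fin m → Fin N, ‖y ε0 i'‖ ^ q ≤ (Cq ^ q) ^ m *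
            ((∑ ε' : Fin m → Fin N → Bool,
              ‖∑ i' : Fin m → Fin N, (∏ l, sg (ε' l (i' l))) • y ε0 i'‖ ^ q) /
              ((2:ℝ) ^ N) ^ m) := fun ε0 => ih (y ε0)
      -- identify the double signed sum with the (m+1)-fold signed sum
      have key : ∀ (ε0 : Fin N → Bool) (ε' : Fin m → Fin N → Bool),
          (∑ i' : Fin m → Fin N, (∏ l, sg (ε' l (i' l))) • y ε0 i')
            = ∑ i, (∏ l, sg ((Fin.cons ε0 ε' : Fin (m+1) → Fin N → Bool) l (i l))) • x i := by
        intro ε0 ε'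
        rw [sum_cons_eq (f := fun i =>
          (∏ l, sg ((Fin.cons ε0 ε' : Fin (m+1) → Fin N → Bool) l (i l))) • x i),
          Finset.sum_comm]
        refine Finset.sum_congr rfl fun i' _ => ?_
        rw [hy]
        dsimp only
        rw [Finset.smul_sum]
        refine Finset.sum_congr rfl fun a _ => ?_
        rw [smul_smul]
        congr 1
        rw [Fin.prod_univ_succ]
        simp [mul_comm]
      calc ∑ i, ‖x i‖ ^ q
          ≤ Cq ^ q * ((∑ ε0 : Fin N → Bool, ∑ i' : Fin m → Fin N, ‖y ε0 i'‖ ^ q) / 2 ^ N) := by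
            rw [step1]; exact step2
        _ ≤ Cq ^ q * ((∑ ε0 : Fin N → Bool, (Cq ^ q) ^ m *
              ((∑ ε' : Fin m → Fin N → Bool,
                ‖∑ i' : Fin m → Fin N, (∏ l, sg (ε' l (i' l))) • y ε0 i'‖ ^ q) /
                ((2:ℝ) ^ N) ^ m)) / 2 ^ N) := by
            gcongr with ε0 _
            exact step3 ε0
        _ = (Cq ^ q) ^ (m+1) * ((∑ ε0 : Fin N → Bool, ∑ ε' : Fin m → Fin N → Bool,
              ‖∑ i, (∏ l, sg ((Fin.cons ε0 ε' : Fin (m+1) → Fin N → Bool) l (i l))) • x i‖ ^ q) /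
              ((2:ℝ) ^ N) ^ (m+1)) := by
            simp only [fun (ε0 : Fin N → Bool) (ε' : Fin m → Fin N → Bool) => key ε0 ε']
            rw [← Finset.mul_sum, ← Finset.sum_div]
            rw [pow_succ, pow_succ]
            field_simp
        _ = (Cq ^ q) ^ (m+1) * ((∑ ε : Fin (m+1) → Fin N → Bool,
              ‖∑ i, (∏ l, sg (ε l (i l))) • x i‖ ^ q) / ((2:ℝ) ^ N) ^ (m+1)) := by
            rw [sum_cons_eq (f := fun ε : Fin (m+1) → Fin N → Bool =>
              ‖∑ i, (∏ l, sg (ε l (i l))) • x i‖ ^ q)]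

lemma cotype_max (hq : 2 ≤ q) (hCq : 0 ≤ Cq) (hcot : HasCotype q Cq Y) (m N : ℕ)
    (x : (Fin m → Fin N) → Y) {R : ℝ} (hR : 0 ≤ R)
    (h : ∀ ε : Fin m → Fin N → Bool, ‖∑ i, (∏ l, sg (ε l (i l))) • x i‖ ≤ R) :
    ∑ i, ‖x i‖ ^ q ≤ (Cq ^ q) ^ m * R ^ q := by
  have hq0 : (0:ℝ) < q := by linarith
  refine (cotype_iter hq hCq hcot m N x).trans ?_
  have hcard : (Fintype.card (Fin m → Fin N → Bool) : ℝ) = ((2:ℝ) ^ N) ^ m := by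
    simp [Fintype.card_fun]
  have hbound : (∑ ε : Fin m → Fin N → Bool, ‖∑ i, (∏ l, sg (ε l (i l))) • x i‖ ^ q)
      ≤ ((2:ℝ) ^ N) ^ m * R ^ q := by
    calc (∑ ε : Fin m → Fin N → Bool, ‖∑ i, (∏ l, sg (ε l (i l))) • x i‖ ^ q)
        ≤ ∑ _ε : Fin m → Fin N → Bool, R ^ q := by
          refine Finset.sum_le_sum fun ε _ => ?_
          exact Real.rpow_le_rpow (norm_nonneg _) (h ε) hq0.le
      _ = ((2:ℝ) ^ N) ^ m * R ^ q := by
          rw [Finset.sum_const, Finset.card_univ, nsmul_eq_mul, hcard]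
  have h2 : (0:ℝ) < ((2:ℝ) ^ N) ^ m := by positivity
  calc (Cq ^ q) ^ m * ((∑ ε : Fin m → Fin N → Bool,
          ‖∑ i, (∏ l, sg (ε l (i l))) • x i‖ ^ q) / ((2:ℝ) ^ N) ^ m)
        ≤ (Cq ^ q) ^ m * ((((2:ℝ) ^ N) ^ m * R ^ q) / ((2:ℝ) ^ N) ^ m) := by
          gcongr
      _ = (Cq ^ q) ^ m * R ^ q := by
          congr 1
          field_simp

end Cotype2

section Main

/-- coordinates of a finite combination of `lp.single`s. -/
lemma coord_sum_single (p : ℝ≥0∞) [Fact (1 ≤ p)] (N : ℕ) (b : Fin N → ℂ) (j : ℕ) :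
    ((∑ k : Fin N, b k • lp.single p (k : ℕ) (1 : ℂ) : lp (fun _ : ℕ => ℂ) p) : ℕ → ℂ) j
      = if hj : j < N then b ⟨j, hj⟩ else 0 := by
  rw [lp.coeFn_sum, Finset.sum_apply]
  have hterm : ∀ k : Fin N,
      ((b k • lp.single p (k : ℕ) (1 : ℂ) : lp (fun _ : ℕ => ℂ) p) : ℕ → ℂ) j
        = if j = (k : ℕ) then b k else 0 := by
    intro k
    rw [lp.coeFn_smul, Pi.smul_apply, smul_eq_mul]
    by_cases h : j = (k : ℕ)
    · subst h
      rw [lp.single_apply_self, if_pos rfl, mul_one]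
    · rw [lp.single_apply_ne p _ _ h, if_neg h, mul_zero]
  rw [Finset.sum_congr rfl fun k _ => hterm k]
  by_cases hj : j < N
  · rw [dif_pos hj]
    rw [Finset.sum_eq_single (⟨j, hj⟩ : Fin N)]
    · simp
    · intro k _ hk
      rw [if_neg]
      intro hjk
      exact hk (Fin.ext hjk.symm)
    · simp
  · rw [dif_neg hj]
    refine Finset.sum_eq_zero fun k _ => ?_
    rw [if_neg]
    intro hjk
    exact hj (hjk ▸ k.isLt)

lemma lp_norm_le_of_top {p : ℝ≥0∞} [Fact (1 ≤ p)] (hp : p = ∞)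
    (f : lp (fun _ : ℕ => ℂ) p) {C : ℝ} (hC : 0 ≤ C) (h : ∀ j, ‖(f : ℕ → ℂ) j‖ ≤ C) :
    ‖f‖ ≤ C := by
  subst hp
  exact lp.norm_le_of_forall_le hC h

lemma key_bound (m : ℕ) (p : Fin m → ℝ≥0∞) [∀ j, Fact (1 ≤ p j)]
    (hp2 : ∀ j, (2 : ℝ≥0∞) ≤ p j)
    (q : ℝ) (hq : 2 ≤ q)
    (S lam : ℝ) (hS : S = ∑ j, ((p j).toReal)⁻¹) (hSq : S < q⁻¹)
    (hlam : lam = (q⁻¹ - S)⁻¹)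
    (X : Type*) [NormedAddCommGroup X] [NormedSpace ℂ X]
    (Cq : ℝ) (hCq : 0 < Cq) (hcot : HasCotype q Cq X)
    (T : ContinuousMultilinearMap ℂ (fun j : Fin m => lp (fun _ : ℕ => ℂ) (p j)) X)
    (N : ℕ) :
    ∑ i : Fin m → Fin N, ‖T (fun l => lp.single (p l) (i l : ℕ) 1)‖ ^ lam
      ≤ (Cq ^ m * ‖T‖) ^ lam := by
  have hq0 : (0:ℝ) < q := by linarith
  have hS0 : 0 ≤ S := by
    rw [hS]; exact Finset.sum_nonneg fun j _ => inv_nonneg.2 ENNReal.toReal_nonneg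
  have hlam0 : 0 < lam := by
    rw [hlam]; exact inv_pos.2 (by linarith)
  have hlaminv : lam⁻¹ = q⁻¹ - S := by rw [hlam, inv_inv]
  have hlam1 : lam * (q⁻¹ - S) = 1 := by
    rw [← hlaminv]; exact mul_inv_cancel₀ hlam0.ne'
  have hlamq : lam = q + q * lam * S := by
    have h1 : lam * (q⁻¹ - S) * q = q := by rw [hlam1, one_mul]
    have h2 : lam * q⁻¹ * q = lam := by
      rw [mul_assoc, inv_mul_cancel₀ hq0.ne', mul_one]
    nlinarith [h1, h2]
  set K := Cq ^ m * ‖T‖ with hK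
  have hK0 : 0 ≤ K := mul_nonneg (pow_nonneg hCq.le m) (norm_nonneg T)
  set a : (Fin m → Fin N) → X := fun i => T (fun l => lp.single (p l) (i l : ℕ) 1) with ha
  set tc : (Fin m → Fin N) → ℝ := fun i => ‖a i‖ with htc
  have htc0 : ∀ i, 0 ≤ tc i := fun i => norm_nonneg _
  set Sig := ∑ i, tc i ^ lam with hSig
  have hSig0 : 0 ≤ Sig :=
    Finset.sum_nonneg fun i _ => Real.rpow_nonneg (htc0 i) _
  show Sig ≤ K ^ lam
  rcases eq_or_lt_of_le hSig0 with hzero | hSigpos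
  · rw [← hzero]; exact Real.rpow_nonneg hK0 _
  -- the positive case
  set invp : Fin m → ℝ := fun l => ((p l).toReal)⁻¹ with hinvp
  have hinvp0 : ∀ l, 0 ≤ invp l := fun l => inv_nonneg.2 ENNReal.toReal_nonneg
  set Fib : Fin m → Fin N → ℝ :=
    fun l k => ∑ i : Fin m → Fin N, if i l = k then tc i ^ lam else 0 with hFib
  have hFib0 : ∀ l k, 0 ≤ Fib l k := fun l k =>
    Finset.sum_nonneg fun i _ => by positivity
  have hFib_le : ∀ (l : Fin m) (i : Fin m → Fin N), tc i ^ lam ≤ Fib l (i l) := by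
    intro l i
    have := Finset.single_le_sum
      (f := fun j : Fin m → Fin N => if j l = i l then tc j ^ lam else 0)
      (fun j _ => by positivity) (Finset.mem_univ i)
    simpa using this
  have hFib_sum : ∀ l : Fin m, ∑ k : Fin N, Fib l k = Sig := by
    intro l
    rw [hFib, Finset.sum_comm]
    refine Finset.sum_congr rfl fun i _ => ?_
    simp
  set c : Fin m → Fin N → ℝ := fun l k => Fib l k ^ invp l with hc
  have hc0 : ∀ l k, 0 ≤ c l k := fun l k => Real.rpow_nonneg (hFib0 l k) _
  set x : (Fin m → Fin N) → X := fun i => (∏ l, c l (i l)) • a i with hx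
  have hxnorm : ∀ i, ‖x i‖ = (∏ l, c l (i l)) * tc i := by
    intro i
    rw [hx]
    dsimp only
    rw [norm_smul, Real.norm_eq_abs, abs_of_nonneg (Finset.prod_nonneg fun l _ => hc0 l (i l))]
  -- lower bound : Sig ≤ ∑ i, ‖x i‖ ^ q
  have hlower : Sig ≤ ∑ i, ‖x i‖ ^ q := by
    refine Finset.sum_le_sum fun i _ => ?_
    rw [hxnorm i]
    rcases eq_or_lt_of_le (htc0 i) with hti | hti
    · rw [← hti, Real.zero_rpow hlam0.ne']
      positivity
    · have h1 : ∀ l, tc i ^ (lam * invp l) ≤ c l (i l) := by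
        intro l
        rw [Real.rpow_mul (htc0 i)]
        exact Real.rpow_le_rpow (Real.rpow_nonneg (htc0 i) _) (hFib_le l i) (hinvp0 l)
      have h2 : tc i ^ (lam * S) ≤ ∏ l, c l (i l) := by
        have := Finset.prod_le_prod (s := (Finset.univ : Finset (Fin m)))
          (f := fun l => tc i ^ (lam * invp l)) (g := fun l => c l (i l))
          (fun l _ => Real.rpow_nonneg (htc0 i) _) (fun l _ => h1 l)
        refine le_trans (le_of_eq ?_) this
        rw [← Real.rpow_sum_of_pos hti, hS, Finset.mul_sum]
      have h3 : tc i ^ (lam * S) * tc i ≤ (∏ l, c l (i l)) * tc i :=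
        mul_le_mul_of_nonneg_right h2 (htc0 i)
      have h4 : tc i ^ (lam * S) * tc i = tc i ^ (lam * S + 1) := by
        rw [Real.rpow_add hti, Real.rpow_one]
      calc tc i ^ lam = (tc i ^ (lam * S + 1)) ^ q := by
            rw [← Real.rpow_mul (htc0 i)]
            congr 1
            linear_combination hlamq
        _ ≤ ((∏ l, c l (i l)) * tc i) ^ q := by
            rw [← h4]
            exact Real.rpow_le_rpow (by positivity) h3 hq0.le
  -- upper bound via cotype
  have hupper : ∑ i, ‖x i‖ ^ q ≤ (Cq ^ q) ^ m * (‖T‖ * Sig ^ S) ^ q := by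
    refine cotype_max hq hCq.le hcot m N x
      (mul_nonneg (norm_nonneg T) (Real.rpow_nonneg hSig0 _)) ?_
    intro ε
    set b : ∀ _l : Fin m, Fin N → ℂ := fun l k => ((sg (ε l k) * c l k : ℝ) : ℂ) with hb
    set g : ∀ l : Fin m, Fin N → lp (fun _ : ℕ => ℂ) (p l) :=
      fun l k => b l k • lp.single (p l) (k : ℕ) 1 with hg
    set u : ∀ l : Fin m, lp (fun _ : ℕ => ℂ) (p l) := fun l => ∑ k : Fin N, g l k with hu
    have hId : (∑ i, (∏ l, sg (ε l (i l))) • x i) = T (fun l => u l) := by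
      have hmap : T (fun l => u l) = ∑ r : Fin m → Fin N, T (fun l => g l (r l)) := by
        rw [hu]
        exact T.toMultilinearMap.map_sum (g := g)
      rw [hmap]
      refine Finset.sum_congr rfl fun i _ => ?_
      have hsmul : T (fun l => g l (i l)) = (∏ l, b l (i l)) • a i := by
        rw [hg]
        exact T.toMultilinearMap.map_smul_univ (fun l => b l (i l))
          (fun l => lp.single (p l) (i l : ℕ) 1)
      rw [hsmul]
      have hprod : (∏ l, b l (i l)) = ((∏ l, sg (ε l (i l)) * c l (i l) : ℝ) : ℂ) := by
        rw [hb]; push_cast; rfl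
      rw [hprod, Complex.coe_smul, Finset.prod_mul_distrib, hx]
      dsimp only
      rw [smul_smul]
    rw [hId]
    have hul : ∀ l, ‖u l‖ ≤ Sig ^ invp l := by
      intro l
      by_cases htop : p l = ∞
      · have hinv : invp l = 0 := by
          simp only [hinvp, htop, ENNReal.toReal_top, inv_zero]
        rw [hinv, Real.rpow_zero]
        refine lp_norm_le_of_top htop (u l) zero_le_one ?_
        intro j
        rw [hu]
        dsimp only [hg]
        rw [coord_sum_single (p l) N (b l) j]
        by_cases hj : j < N
        · rw [dif_pos hj]
          rw [hb]
          dsimp only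
          rw [Complex.norm_real, Real.norm_eq_abs, abs_mul, abs_sg, one_mul]
          have hcval : c l ⟨j, hj⟩ = 1 := by
            simp only [hc, hinv, Real.rpow_zero]
          rw [abs_of_nonneg (hc0 l ⟨j, hj⟩), hcval]
        · rw [dif_neg hj]; simp
      · have hpt2 : (2:ℝ) ≤ (p l).toReal := by
          have h := ENNReal.toReal_mono htop (hp2 l)
          simpa using h
        have hpt0 : (0:ℝ) < (p l).toReal := by linarith
        set f : ℕ → ℂ := fun k => if hk : k < N then b l ⟨k, hk⟩ else 0 with hf
        have husum : u l = ∑ k ∈ Finset.range N, lp.single (p l) k (f k) := by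
          rw [hu]
          dsimp only
          rw [← Fin.sum_univ_eq_sum_range (fun k => lp.single (p l) k (f k)) N]
          refine Finset.sum_congr rfl fun k _ => ?_
          rw [hg]
          dsimp only
          have hfk : f (k : ℕ) = b l k := by
            rw [hf]
            dsimp only
            rw [dif_pos k.isLt]
          rw [hfk, ← lp.single_smul, smul_eq_mul, mul_one]
        have hnorm : ‖u l‖ ^ (p l).toReal = ∑ k ∈ Finset.range N, ‖f k‖ ^ (p l).toReal := by
          rw [husum]; exact lp.norm_sum_single hpt0 f (Finset.range N)
        have hval : ∑ k ∈ Finset.range N, ‖f k‖ ^ (p l).toReal = Sig := by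
          rw [← Fin.sum_univ_eq_sum_range (fun k => ‖f k‖ ^ (p l).toReal) N]
          have hterm : ∀ k : Fin N, ‖f (k : ℕ)‖ ^ (p l).toReal = Fib l k := by
            intro k
            have hfk : f (k : ℕ) = b l k := by
              rw [hf]; dsimp only; rw [dif_pos k.isLt]
            rw [hfk, hb]
            dsimp only
            rw [Complex.norm_real, Real.norm_eq_abs, abs_mul, abs_sg, one_mul,
              abs_of_nonneg (hc0 l k), hc]
            dsimp only
            rw [← Real.rpow_mul (hFib0 l k), inv_mul_cancel₀ hpt0.ne', Real.rpow_one]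
          rw [Finset.sum_congr rfl fun k _ => hterm k]
          exact hFib_sum l
        have h5 : ‖u l‖ ^ (p l).toReal = Sig := hnorm.trans hval
        have h6 : ‖u l‖ = Sig ^ ((p l).toReal)⁻¹ := by
          rw [← h5, Real.rpow_rpow_inv (norm_nonneg _) hpt0.ne']
        rw [h6, hinvp]
    calc ‖T (fun l => u l)‖ ≤ ‖T‖ * ∏ l, ‖u l‖ := T.le_opNorm _
      _ ≤ ‖T‖ * ∏ l, Sig ^ invp l := by
          refine mul_le_mul_of_nonneg_left ?_ (norm_nonneg T)
          exact Finset.prod_le_prod (fun l _ => norm_nonneg _) (fun l _ => hul l)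
      _ = ‖T‖ * Sig ^ S := by
          rw [hS, Real.rpow_sum_of_pos hSigpos]
  -- combine the two bounds
  have hcomb : Sig ≤ (Cq ^ q) ^ m * (‖T‖ * Sig ^ S) ^ q := hlower.trans hupper
  have hD : ((Cq:ℝ) ^ m) ^ q = (Cq ^ q) ^ m := by
    rw [← Real.rpow_natCast (Cq ^ q) m, ← Real.rpow_natCast Cq m,
      ← Real.rpow_mul hCq.le, ← Real.rpow_mul hCq.le, mul_comm]
  have hbig : Sig ≤ K ^ q * Sig ^ (S * q) := by
    have hsplit : (‖T‖ * Sig ^ S) ^ q = ‖T‖ ^ q * Sig ^ (S * q) := by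
      rw [Real.mul_rpow (norm_nonneg T) (Real.rpow_nonneg hSig0 _), ← Real.rpow_mul hSig0]
    calc Sig ≤ (Cq ^ q) ^ m * (‖T‖ * Sig ^ S) ^ q := hcomb
      _ = K ^ q * Sig ^ (S * q) := by
          rw [hsplit, hK, Real.mul_rpow (pow_nonneg hCq.le m) (norm_nonneg T), hD]
          ring
  have hcancel : Sig ^ (1 - S * q) ≤ K ^ q := by
    have hpos : 0 < Sig ^ (S * q) := Real.rpow_pos_of_pos hSigpos _
    have h6 : Sig ^ (1 - S * q) = Sig / Sig ^ (S * q) := by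
      rw [eq_div_iff hpos.ne', ← Real.rpow_add hSigpos]
      norm_num
    rw [h6, div_le_iff₀ hpos]
    exact hbig
  have hnum : (1 - S * q) * lam = q := by linear_combination hlamq
  have hexp : (1 - S * q) * (lam / q) = 1 := by
    rw [mul_div_assoc', hnum, div_self hq0.ne']
  calc Sig = (Sig ^ (1 - S * q)) ^ (lam / q) := by
        rw [← Real.rpow_mul hSig0, hexp, Real.rpow_one]
    _ ≤ (K ^ q) ^ (lam / q) :=
        Real.rpow_le_rpow (Real.rpow_nonneg hSig0 _) hcancel
          (div_nonneg hlam0.le hq0.le)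
    _ = K ^ lam := by
        rw [← Real.rpow_mul hK0]
        congr 1
        field_simp

end Main

/-- for `2 ≤ p_j ≤ ∞`, `q ≥ 2` with `∑ 1/p_j < 1/q` and
`1/λ = 1/q - ∑ 1/p_j`, every bounded `m`-linear map into a cotype-`q` space `X` has
`λ`-summable coefficients: `(∑ ‖a‖^λ)^{1/λ} ≤ C‖T‖`. -/
theorem stmt10 (m : ℕ) (hm : 0 < m) (p : Fin m → ℝ≥0∞) [∀ j, Fact (1 ≤ p j)]
    (hp2 : ∀ j, (2 : ℝ≥0∞) ≤ p j)
    (q : ℝ) (hq : 2 ≤ q)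
    (S lam : ℝ) (hS : S = ∑ j, ((p j).toReal)⁻¹) (hSq : S < q⁻¹)
    (hlam : lam = (q⁻¹ - S)⁻¹)
    (X : Type*) [NormedAddCommGroup X] [NormedSpace ℂ X] [CompleteSpace X]
    (Cq : ℝ) (hCq : 0 < Cq) (hcot : HasCotype q Cq X) :
    ∃ C > (0 : ℝ),
      ∀ T : ContinuousMultilinearMap ℂ (fun j : Fin m => lp (fun _ : ℕ => ℂ) (p j)) X,
        Summable (fun i : Fin m → ℕ => ‖T (fun l => lp.single (p l) (i l) 1)‖ ^ lam) ∧
        (∑' i : Fin m → ℕ, ‖T (fun l => lp.single (p l) (i l) 1)‖ ^ lam) ^ (1 / lam) ≤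
          C * ‖T‖ := by
  have hq0 : (0:ℝ) < q := by linarith
  have hlam0 : 0 < lam := by rw [hlam]; exact inv_pos.2 (by linarith)
  refine ⟨Cq ^ m, pow_pos hCq m, fun T => ?_⟩
  set t : (Fin m → ℕ) → ℝ := fun i => ‖T fun l => lp.single (p l) (i l) 1‖ with ht
  have hnn : ∀ i, 0 ≤ t i ^ lam := fun i => Real.rpow_nonneg (norm_nonneg _) _
  set K := Cq ^ m * ‖T‖ with hK
  have hK0 : 0 ≤ K := mul_nonneg (pow_nonneg hCq.le m) (norm_nonneg T)
  have key : ∀ N : ℕ, ∑ i : Fin m → Fin N, t (fun l => (i l : ℕ)) ^ lam ≤ K ^ lam :=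
    fun N => key_bound m p hp2 q hq S lam hS hSq hlam X Cq hCq hcot T N
  have bnd : ∀ u : Finset (Fin m → ℕ), ∑ i ∈ u, t i ^ lam ≤ K ^ lam := by
    intro u
    set N : ℕ := (u.sup fun i => Finset.univ.sup i) + 1 with hN
    have hlt : ∀ i ∈ u, ∀ l, i l < N := by
      intro i hi l
      have h1 : i l ≤ Finset.univ.sup i := Finset.le_sup (Finset.mem_univ l)
      have h2 : Finset.univ.sup i ≤ u.sup fun i => Finset.univ.sup i := Finset.le_sup hi
      omega
    set e : (Fin m → Fin N) → (Fin m → ℕ) := fun i l => (i l : ℕ) with he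
    have hinj : ∀ x ∈ (Finset.univ : Finset (Fin m → Fin N)), ∀ y ∈ Finset.univ,
        e x = e y → x = y := by
      intro x _ y _ hxy
      funext l
      exact Fin.ext (congrFun hxy l)
    have hsub : u ⊆ Finset.image e Finset.univ := by
      intro i hi
      exact Finset.mem_image.2 ⟨fun l => ⟨i l, hlt i hi l⟩, Finset.mem_univ _, rfl⟩
    calc ∑ i ∈ u, t i ^ lam ≤ ∑ i ∈ Finset.image e Finset.univ, t i ^ lam :=
          Finset.sum_le_sum_of_subset_of_nonneg hsub (fun i _ _ => hnn i)
      _ = ∑ i : Fin m → Fin N, t (e i) ^ lam := Finset.sum_image hinj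
      _ ≤ K ^ lam := key N
  have hsum : Summable fun i => t i ^ lam := summable_of_sum_le (fun i => hnn i) bnd
  refine ⟨hsum, ?_⟩
  have htsum : ∑' i, t i ^ lam ≤ K ^ lam := Summable.tsum_le_of_sum_le hsum bnd
  calc (∑' i, t i ^ lam) ^ (1/lam) ≤ (K ^ lam) ^ (1/lam) :=
        Real.rpow_le_rpow (tsum_nonneg fun i => hnn i) htsum (by positivity)
    _ = K := by
        rw [← Real.rpow_mul hK0, mul_one_div, div_self hlam0.ne', Real.rpow_one]
end
end

section
/- Let $a_{kl} = e^{2\pi i k l / n}$ be the $n \times n$ Fourier matrix. For $1 \le u \le 2$ and $1 \le p_1, \dots, p_m \le \infty$ with $\frac{1}{p_1} + \cdots + \frac{1}{p_m} < \frac{1}{2}$, the $m$-linear map $T : \ell_{p_1}^n \times \cdots \times \ell_{p_m}^n \to \ell_u^n$ given by $T(x^{(1)},\dots,x^{(m)}) = \sum_{i=1}^n \sum_{j=1}^n a_{ij}\, x^{(1)}_j \cdots x^{(m)}_j\, e_i$ satisfies $\|T\| \le n^{\frac{1}{2} + \frac{1}{u} - (\frac{1}{p_1} + \cdots + \frac{1}{p_m})}$.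 -/
open scoped ENNReal Classical

open Finset in
/-- Generalized Hölder inequality for finite sums, `ℝ≥0∞` version. -/
lemma stmt15_holderE {ι α : Type*} [Fintype α] (s : Finset ι) (f : ι → α → ℝ≥0∞)
    (c : ι → ℝ) (hc : ∀ i ∈ s, 0 ≤ c i) (hc1 : ∑ i ∈ s, c i = 1) :
    ∑ a, ∏ i ∈ s, f i a ^ c i ≤ ∏ i ∈ s, (∑ a, f i a) ^ c i := by
  classical
  letI : MeasurableSpace α := ⊤
  have key := ENNReal.lintegral_prod_norm_pow_le (μ := MeasureTheory.Measure.count) s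
    (f := fun i a => f i a) (fun i _ => (measurable_of_countable _).aemeasurable) hc1 hc
  simpa [MeasureTheory.lintegral_count, tsum_fintype] using key

open Finset in
/-- Generalized Hölder inequality for finite sums, real version. -/
lemma stmt15_holderR {ι α : Type*} [Fintype α] (s : Finset ι) (f : ι → α → ℝ)
    (hf : ∀ i a, 0 ≤ f i a)
    (c : ι → ℝ) (hc : ∀ i ∈ s, 0 ≤ c i) (hc1 : ∑ i ∈ s, c i = 1) :
    ∑ a, ∏ i ∈ s, f i a ^ c i ≤ ∏ i ∈ s, (∑ a, f i a) ^ c i := by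
  classical
  have key := stmt15_holderE s (fun i a => ENNReal.ofReal (f i a)) c hc hc1
  have L : ∑ a, ∏ i ∈ s, ENNReal.ofReal (f i a) ^ c i
      = ENNReal.ofReal (∑ a, ∏ i ∈ s, f i a ^ c i) := by
    rw [ENNReal.ofReal_sum_of_nonneg (fun a _ => Finset.prod_nonneg
      (fun i hi => Real.rpow_nonneg (hf i a) _))]
    refine Finset.sum_congr rfl (fun a _ => ?_)
    rw [ENNReal.ofReal_prod_of_nonneg (fun i hi => Real.rpow_nonneg (hf i a) _)]
    exact Finset.prod_congr rfl (fun i hi =>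
      ENNReal.ofReal_rpow_of_nonneg (hf i a) (hc i hi))
  have R : ∏ i ∈ s, (∑ a, ENNReal.ofReal (f i a)) ^ c i
      = ENNReal.ofReal (∏ i ∈ s, (∑ a, f i a) ^ c i) := by
    rw [ENNReal.ofReal_prod_of_nonneg (fun i hi => Real.rpow_nonneg
      (Finset.sum_nonneg (fun a _ => hf i a)) _)]
    refine Finset.prod_congr rfl (fun i hi => ?_)
    rw [← ENNReal.ofReal_rpow_of_nonneg (Finset.sum_nonneg (fun a _ => hf i a)) (hc i hi),
      ENNReal.ofReal_sum_of_nonneg (fun a _ => hf i a)]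
  rw [L, R, ENNReal.ofReal_le_ofReal_iff (Finset.prod_nonneg
    (fun i hi => Real.rpow_nonneg (Finset.sum_nonneg (fun a _ => hf i a)) _))] at key
  exact key

open Complex in
/-- Orthogonality of the rows of the Fourier matrix. -/
lemma stmt15_orthog (n : ℕ) (l l' : Fin n) :
    ∑ i : Fin n, Complex.exp (2 * Real.pi * Complex.I * (i : ℕ) * (l : ℕ) / n) *
      (starRingEnd ℂ) (Complex.exp (2 * Real.pi * Complex.I * (i : ℕ) * (l' : ℕ) / n))
    = if l = l' then (n : ℂ) else 0 := by
  have hn0 : n ≠ 0 := fun h => by subst h; exact l.elim0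
  have hn : (n : ℂ) ≠ 0 := Nat.cast_ne_zero.mpr hn0
  have hterm : ∀ i : Fin n,
      Complex.exp (2 * Real.pi * Complex.I * (i : ℕ) * (l : ℕ) / n) *
      (starRingEnd ℂ) (Complex.exp (2 * Real.pi * Complex.I * (i : ℕ) * (l' : ℕ) / n))
      = Complex.exp (2 * Real.pi * Complex.I * (((l : ℕ) : ℂ) - ((l' : ℕ) : ℂ)) / n) ^ (i : ℕ) := by
    intro i
    rw [← Complex.exp_conj, ← Complex.exp_add, ← Complex.exp_nat_mul]
    congr 1
    have : (starRingEnd ℂ) (2 * Real.pi * Complex.I * (i : ℕ) * (l' : ℕ) / n)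
        = -(2 * Real.pi * Complex.I * (i : ℕ) * (l' : ℕ) / n) := by
      simp [map_div₀, map_mul, map_ofNat, Complex.conj_I, Complex.conj_natCast,
        Complex.conj_ofReal]
      ring
    rw [this]
    ring
  rw [Finset.sum_congr rfl (fun i _ => hterm i)]
  set ζ : ℂ := Complex.exp (2 * Real.pi * Complex.I * (((l : ℕ) : ℂ) - ((l' : ℕ) : ℂ)) / n)
    with hζdef
  by_cases h : l = l'
  · subst h
    simp [ζ, Complex.exp_zero]
  · rw [if_neg h]
    have hζn : ζ ^ n = 1 := by
      rw [hζdef, ← Complex.exp_nat_mul]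
      have : (n : ℂ) * (2 * Real.pi * Complex.I * (((l : ℕ) : ℂ) - ((l' : ℕ) : ℂ)) / n)
          = ((((l : ℕ) : ℤ) - ((l' : ℕ) : ℤ) : ℤ) : ℂ) * (2 * Real.pi * Complex.I) := by
        field_simp
        push_cast
        ring
      rw [this, Complex.exp_int_mul_two_pi_mul_I]
    have hζ1 : ζ ≠ 1 := by
      intro hζ
      rw [hζdef, Complex.exp_eq_one_iff] at hζ
      obtain ⟨k, hk⟩ := hζ
      have h2πI : (2 * Real.pi * Complex.I : ℂ) ≠ 0 := by
        simp [Real.pi_ne_zero, Complex.I_ne_zero, Complex.ofReal_ne_zero]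
      have hC : ((l : ℕ) : ℂ) - ((l' : ℕ) : ℂ) = (k : ℂ) * (n : ℂ) := by
        field_simp at hk
        linear_combination hk
      have hZ : ((l : ℕ) : ℤ) - ((l' : ℕ) : ℤ) = k * n := by
        exact_mod_cast hC
      have hk0 : k ≠ 0 := by
        rintro rfl
        simp only [zero_mul] at hZ
        exact h (Fin.ext (by omega))
      have hl : ((l : ℕ) : ℤ) < n := by exact_mod_cast l.isLt
      have hl' : ((l' : ℕ) : ℤ) < n := by exact_mod_cast l'.isLt
      have habs : |((l : ℕ) : ℤ) - ((l' : ℕ) : ℤ)| < n := by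
        rw [abs_lt]
        constructor <;> [linarith [Int.natCast_nonneg (l : ℕ)];
          linarith [Int.natCast_nonneg (l' : ℕ)]]
      have hge : (n : ℤ) ≤ |k * n| := by
        rw [abs_mul, Int.abs_natCast]
        calc (n : ℤ) = 1 * n := (one_mul _).symm
          _ ≤ |k| * n := by
            have : (1 : ℤ) ≤ |k| := Int.one_le_abs hk0
            exact mul_le_mul_of_nonneg_right this (Int.natCast_nonneg n)
      rw [← hZ] at hge
      linarith
    rw [Fin.sum_univ_eq_sum_range (fun i => ζ ^ i) n, geom_sum_eq hζ1, hζn]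
    simp

/-- Parseval-type identity for the Fourier matrix. -/
lemma stmt15_parseval (n : ℕ) (z : Fin n → ℂ) :
    ∑ i : Fin n, ‖∑ l : Fin n,
        Complex.exp (2 * Real.pi * Complex.I * (i : ℕ) * (l : ℕ) / n) * z l‖ ^ 2
      = n * ∑ l : Fin n, ‖z l‖ ^ 2 := by
  set a : Fin n → Fin n → ℂ :=
    fun i l => Complex.exp (2 * Real.pi * Complex.I * (i : ℕ) * (l : ℕ) / n) with ha
  set y : Fin n → ℂ := fun i => ∑ l, a i l * z l with hy
  have C : ∑ i, y i * (starRingEnd ℂ) (y i) = n * ∑ l, z l * (starRingEnd ℂ) (z l) := by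
    calc ∑ i, y i * (starRingEnd ℂ) (y i)
        = ∑ i, ∑ l, ∑ l', (z l * (starRingEnd ℂ) (z l')) * (a i l * (starRingEnd ℂ) (a i l')) := by
          refine Finset.sum_congr rfl fun i _ => ?_
          rw [hy, map_sum, Finset.sum_mul_sum]
          refine Finset.sum_congr rfl fun l _ => Finset.sum_congr rfl fun l' _ => ?_
          simp only [map_mul]
          ring
      _ = ∑ l, ∑ l', (z l * (starRingEnd ℂ) (z l')) * ∑ i, (a i l * (starRingEnd ℂ) (a i l')) := by
          rw [Finset.sum_comm]
          refine Finset.sum_congr rfl fun l _ => ?_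
          rw [Finset.sum_comm]
          refine Finset.sum_congr rfl fun l' _ => ?_
          rw [← Finset.mul_sum]
      _ = ∑ l, (z l * (starRingEnd ℂ) (z l)) * n := by
          refine Finset.sum_congr rfl fun l _ => ?_
          rw [Finset.sum_congr rfl (fun l' _ => by rw [stmt15_orthog n l l'])]
          simp
      _ = n * ∑ l, z l * (starRingEnd ℂ) (z l) := by
          rw [Finset.mul_sum]
          exact Finset.sum_congr rfl fun l _ => mul_comm _ _
  have hnorm : ∀ w : ℂ, ((‖w‖ : ℂ)) ^ 2 = w * (starRingEnd ℂ) w := by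
    intro w
    rw [Complex.mul_conj]
    norm_cast
    rw [Complex.normSq_eq_norm_sq]
  have C2 : ((∑ i, ‖y i‖ ^ 2 : ℝ) : ℂ) = ((n * ∑ l, ‖z l‖ ^ 2 : ℝ) : ℂ) := by
    push_cast
    simp_rw [hnorm]
    exact C
  exact Complex.ofReal_injective C2

/-- Each coordinate of a `PiLp` vector is dominated by its norm. -/
lemma stmt15_apply_le_norm {n : ℕ} (q : ℝ≥0∞) [Fact (1 ≤ q)]
    (v : PiLp q (fun _ : Fin n => ℂ)) (i : Fin n) : ‖v i‖ ≤ ‖v‖ := by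
  by_cases hq : q = ∞
  · subst hq
    rw [PiLp.norm_eq_ciSup]
    exact le_ciSup (f := fun i => ‖v i‖) (Set.Finite.bddAbove (Set.finite_range _)) i
  · have hq1 : (1 : ℝ) ≤ q.toReal := by
      rw [← ENNReal.toReal_one]
      exact ENNReal.toReal_mono hq (Fact.out)
    have hq0 : 0 < q.toReal := lt_of_lt_of_le one_pos hq1
    rw [PiLp.norm_eq_sum hq0]
    have h1 : ‖v i‖ ^ q.toReal ≤ ∑ i', ‖v i'‖ ^ q.toReal :=
      Finset.single_le_sum (fun i' _ => Real.rpow_nonneg (norm_nonneg _) _)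
        (Finset.mem_univ i)
    calc ‖v i‖ = (‖v i‖ ^ q.toReal) ^ (1 / q.toReal) := by
          rw [one_div, Real.rpow_rpow_inv (norm_nonneg _) hq0.ne']
      _ ≤ (∑ i', ‖v i'‖ ^ q.toReal) ^ (1 / q.toReal) :=
          Real.rpow_le_rpow (Real.rpow_nonneg (norm_nonneg _) _) h1
            (le_of_lt (by positivity))

/-- The `p`-th power of the `PiLp` norm is the sum of powers of coordinates. -/
lemma stmt15_norm_rpow_eq {n : ℕ} (q : ℝ≥0∞) [Fact (1 ≤ q)] (hq : 0 < q.toReal)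
    (v : PiLp q (fun _ : Fin n => ℂ)) :
    ‖v‖ ^ q.toReal = ∑ i, ‖v i‖ ^ q.toReal := by
  rw [PiLp.norm_eq_sum hq, ← Real.rpow_mul
    (Finset.sum_nonneg fun i _ => Real.rpow_nonneg (norm_nonneg _) _),
    one_div, inv_mul_cancel₀ hq.ne', Real.rpow_one]

/-- Comparison of `ℓ^U` and `ℓ^2` norms for `U ≤ 2`. -/
lemma stmt15_step2 {n : ℕ} {U : ℝ} (hU1 : 1 ≤ U) (hU2 : U ≤ 2) (y : Fin n → ℂ) :
    ∑ i, ‖y i‖ ^ U ≤ (∑ i, ‖y i‖ ^ 2) ^ (U / 2) * (n : ℝ) ^ (1 - U / 2) := by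
  have key := stmt15_holderR (α := Fin n) (Finset.univ : Finset Bool)
    (fun b i => if b then ‖y i‖ ^ 2 else 1)
    (fun b i => by split <;> positivity)
    (fun b => if b then U / 2 else 1 - U / 2)
    (fun b _ => by split <;> [positivity; linarith])
    (by rw [Fintype.sum_bool]; norm_num)
  norm_num [Fintype.prod_bool] at key
  have h1 : ∀ i : Fin n, ((‖y i‖ ^ 2 : ℝ)) ^ (U / 2) = ‖y i‖ ^ U := by
    intro i
    rw [← Real.rpow_two, ← Real.rpow_mul (norm_nonneg _)]
    congr 1
    ring
  calc ∑ i, ‖y i‖ ^ U = ∑ i, ((‖y i‖ ^ 2 : ℝ)) ^ (U / 2) :=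
        Finset.sum_congr rfl fun i _ => (h1 i).symm
    _ ≤ (∑ i, ‖y i‖ ^ 2) ^ (U / 2) * (n : ℝ) ^ (1 - U / 2) := key

/-- The key Hölder estimate for the diagonal coefficients. -/
lemma stmt15_step4 {m n : ℕ} (p : Fin m → ℝ≥0∞) [∀ j, Fact (1 ≤ p j)]
    (S : ℝ) (hS : S = ∑ j, ((p j).toReal)⁻¹) (hS2 : S < 1 / 2)
    (x : ∀ j, PiLp (p j) fun _ : Fin n => ℂ) :
    ∑ l, ∏ j, ‖x j l‖ ^ 2 ≤ (n : ℝ) ^ (1 - 2 * S) * ∏ j, ‖x j‖ ^ 2 := by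
  classical
  set J : Finset (Fin m) := Finset.univ.filter (fun j => p j ≠ ∞) with hJ
  have hP1 : ∀ j ∈ J, 1 ≤ (p j).toReal := by
    intro j hj
    rw [← ENNReal.toReal_one]
    exact ENNReal.toReal_mono (Finset.mem_filter.mp hj).2 (Fact.out)
  have hP0 : ∀ j ∈ J, (p j).toReal ≠ 0 := fun j hj =>
    (lt_of_lt_of_le one_pos (hP1 j hj)).ne'
  have hSJ : ∑ j ∈ J, ((p j).toReal)⁻¹ = S := by
    rw [hS]
    apply Finset.sum_subset (Finset.subset_univ J)
    intro j _ hj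
    have : p j = ∞ := by
      by_contra hne
      exact hj (Finset.mem_filter.mpr ⟨Finset.mem_univ j, hne⟩)
    simp [this]
  have key := stmt15_holderR (α := Fin n) (insert none (J.image some))
    (fun o i => o.elim 1 (fun j => ‖x j i‖ ^ (p j).toReal))
    (fun o i => by cases o <;> dsimp only [Option.elim] <;> positivity)
    (fun o => o.elim (1 - 2 * S) (fun j => 2 / (p j).toReal))
    (fun o ho => by
      cases o with
      | none => dsimp only [Option.elim]; linarith
      | some j => dsimp only [Option.elim]; positivity)
    (by
      rw [Finset.sum_insert (by simp)]
      rw [Finset.sum_image (fun a _ b _ h => Option.some_injective _ h)]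
      dsimp only [Option.elim]
      simp only [div_eq_mul_inv, ← Finset.mul_sum, hSJ]
      ring)
  have hnone : (none : Option (Fin m)) ∉ J.image some := by simp
  have hinj : ∀ a ∈ J, ∀ b ∈ J, some a = some b → a = b :=
    fun a _ b _ h => Option.some_injective _ h
  have hL : ∀ i : Fin n, ∏ o ∈ insert none (J.image some),
      (o.elim 1 (fun j => ‖x j i‖ ^ (p j).toReal) : ℝ) ^ o.elim (1 - 2 * S) (fun j => 2 / (p j).toReal)
      = ∏ j ∈ J, ‖x j i‖ ^ 2 := by
    intro i
    rw [Finset.prod_insert hnone, Finset.prod_image hinj]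
    dsimp only [Option.elim]
    rw [Real.one_rpow, one_mul]
    refine Finset.prod_congr rfl fun j hj => ?_
    rw [← Real.rpow_mul (norm_nonneg _), mul_div_cancel₀ 2 (hP0 j hj), Real.rpow_two]
  have hR : ∏ o ∈ insert none (J.image some),
      ((∑ i, (o.elim 1 (fun j => ‖x j i‖ ^ (p j).toReal) : ℝ)))
        ^ o.elim (1 - 2 * S) (fun j => 2 / (p j).toReal)
      = (n : ℝ) ^ (1 - 2 * S) * ∏ j ∈ J, ‖x j‖ ^ 2 := by
    rw [Finset.prod_insert hnone, Finset.prod_image hinj]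
    dsimp only [Option.elim]
    congr 1
    · norm_num
    refine Finset.prod_congr rfl fun j hj => ?_
    rw [← stmt15_norm_rpow_eq (p j) (lt_of_lt_of_le one_pos (hP1 j hj)),
      ← Real.rpow_mul (norm_nonneg _), mul_div_cancel₀ 2 (hP0 j hj), Real.rpow_two]
  simp only [hL, hR] at key
  have hpt : ∀ l, ∏ j, ‖x j l‖ ^ 2 ≤ (∏ j ∈ Jᶜ, ‖x j‖ ^ 2) * ∏ j ∈ J, ‖x j l‖ ^ 2 := by
    intro l
    rw [← Finset.prod_mul_prod_compl J (fun j => ‖x j l‖ ^ 2), mul_comm]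
    refine mul_le_mul_of_nonneg_right ?_
      (Finset.prod_nonneg fun j _ => by positivity)
    exact Finset.prod_le_prod (fun j _ => by positivity)
      (fun j _ => pow_le_pow_left₀ (norm_nonneg _) (stmt15_apply_le_norm (p j) (x j) l) 2)
  calc ∑ l, ∏ j, ‖x j l‖ ^ 2
      ≤ ∑ l, (∏ j ∈ Jᶜ, ‖x j‖ ^ 2) * ∏ j ∈ J, ‖x j l‖ ^ 2 :=
        Finset.sum_le_sum fun l _ => hpt l
    _ = (∏ j ∈ Jᶜ, ‖x j‖ ^ 2) * ∑ l, ∏ j ∈ J, ‖x j l‖ ^ 2 := by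
        rw [Finset.mul_sum]
    _ ≤ (∏ j ∈ Jᶜ, ‖x j‖ ^ 2) * ((n : ℝ) ^ (1 - 2 * S) * ∏ j ∈ J, ‖x j‖ ^ 2) :=
        mul_le_mul_of_nonneg_left key (Finset.prod_nonneg fun j _ => by positivity)
    _ = (n : ℝ) ^ (1 - 2 * S) * ∏ j, ‖x j‖ ^ 2 := by
        rw [← Finset.prod_mul_prod_compl J (fun j => ‖x j‖ ^ 2)]
        ring

/-- Coordinatewise description of the multilinear map `T`. -/
lemma stmt15_repr (m : ℕ) (hm : 0 < m) (p : Fin m → ℝ≥0∞) [∀ j, Fact (1 ≤ p j)]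
    (u : ℝ≥0∞) [Fact (1 ≤ u)]
    (n : ℕ)
    (T : ContinuousMultilinearMap ℂ (fun j : Fin m => PiLp (p j) fun _ : Fin n => ℂ)
      (PiLp u fun _ : Fin n => ℂ))
    (hT1 : ∀ l : Fin n,
      T (fun j => (WithLp.equiv (p j) (Fin n → ℂ)).symm (Pi.single l 1)) =
        (WithLp.equiv u (Fin n → ℂ)).symm
          (fun i : Fin n => Complex.exp (2 * Real.pi * Complex.I * (i : ℕ) * (l : ℕ) / n)))
    (hT2 : ∀ k : Fin m → Fin n, (¬ ∃ l, ∀ j, k j = l) →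
      T (fun j => (WithLp.equiv (p j) (Fin n → ℂ)).symm (Pi.single (k j) 1)) = 0)
    (x : ∀ j : Fin m, PiLp (p j) fun _ : Fin n => ℂ) (i : Fin n) :
    T x i = ∑ l : Fin n, Complex.exp (2 * Real.pi * Complex.I * (i : ℕ) * (l : ℕ) / n)
      * ∏ j, x j l := by
  classical
  set e : ∀ j : Fin m, Fin n → PiLp (p j) fun _ : Fin n => ℂ :=
    fun j l => (WithLp.equiv (p j) (Fin n → ℂ)).symm (Pi.single l 1) with he
  have hxrep : ∀ j, x j = ∑ l, x j l • e j l := by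
    intro j
    ext l'
    have hsum : (∑ l, x j l • e j l) l' = ∑ l, (x j l • e j l) l' :=
      by rw [WithLp.ofLp_sum]; exact Finset.sum_apply l' Finset.univ _
    rw [hsum]
    simp only [PiLp.smul_apply, he, WithLp.equiv_symm_apply, PiLp.toLp_apply, smul_eq_mul]
    simp [Pi.single_apply, mul_comm]
  have expand : T x = ∑ k : Fin m → Fin n, (∏ j, x j (k j)) • T (fun j => e j (k j)) := by
    calc T x = T (fun j => ∑ l, x j l • e j l) := by
          congr 1
          funext j
          exact hxrep j
      _ = ∑ k : Fin m → Fin n, T (fun j => x j (k j) • e j (k j)) :=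
          T.map_sum (fun j l => x j l • e j l)
      _ = ∑ k : Fin m → Fin n, (∏ j, x j (k j)) • T (fun j => e j (k j)) := by
          refine Finset.sum_congr rfl fun k _ => ?_
          exact T.toMultilinearMap.map_smul_univ (fun j => x j (k j)) (fun j => e j (k j))
  have diag : ∑ k : Fin m → Fin n, (∏ j, x j (k j)) • T (fun j => e j (k j))
      = ∑ l : Fin n, (∏ j, x j l) • T (fun j => e j l) := by
    rw [← Finset.sum_filter_add_sum_filter_not Finset.univ (fun k => ∃ l, ∀ j, k j = l)]
    have h2 : ∑ k ∈ Finset.univ.filter (fun k : Fin m → Fin n => ¬ ∃ l, ∀ j, k j = l),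
        (∏ j, x j (k j)) • T (fun j => e j (k j)) = 0 := by
      refine Finset.sum_eq_zero fun k hk => ?_
      rw [hT2 k (Finset.mem_filter.mp hk).2]
      simp
    rw [h2, add_zero]
    have himg : Finset.univ.filter (fun k : Fin m → Fin n => ∃ l, ∀ j, k j = l)
        = Finset.univ.image (fun l : Fin n => (fun _ : Fin m => l)) := by
      ext k
      simp only [Finset.mem_filter, Finset.mem_univ, true_and, Finset.mem_image]
      constructor
      · rintro ⟨l, hl⟩; exact ⟨l, (funext fun j => (hl j)).symm⟩
      · rintro ⟨l, rfl⟩; exact ⟨l, fun j => rfl⟩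
    rw [himg, Finset.sum_image]
    intro l _ l' _ hll'
    exact congrFun hll' ⟨0, hm⟩
  rw [expand, diag]
  have happ : (∑ l : Fin n, (∏ j, x j l) • T (fun j => e j l)) i
      = ∑ l : Fin n, ((∏ j, x j l) • T (fun j => e j l)) i :=
    by rw [WithLp.ofLp_sum]; exact Finset.sum_apply i Finset.univ _
  rw [happ]
  refine Finset.sum_congr rfl fun l _ => ?_
  rw [hT1 l]
  simp only [PiLp.smul_apply, WithLp.equiv_symm_apply, PiLp.toLp_apply, smul_eq_mul]
  ring

/-- the `m`-linear map built from the Fourier matrix `a_{kl} = e^{2πikl/n}`,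
`T(x⁽¹⁾,…,x⁽ᵐ⁾) = ∑_i ∑_j a_{ij} x⁽¹⁾_j ⋯ x⁽ᵐ⁾_j e_i : ℓ_{p₁}ⁿ × ⋯ × ℓ_{p_m}ⁿ → ℓ_uⁿ`
(characterized by its coefficients) has norm at most `n^{1/2 + 1/u - ∑ 1/p_j}`
for `1 ≤ u ≤ 2` and `∑ 1/p_j < 1/2`. -/
theorem stmt15 (m : ℕ) (hm : 0 < m) (p : Fin m → ℝ≥0∞) [∀ j, Fact (1 ≤ p j)]
    (u : ℝ≥0∞) [Fact (1 ≤ u)] (hu : u ≤ 2)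
    (S : ℝ) (hS : S = ∑ j, ((p j).toReal)⁻¹) (hS2 : S < 1 / 2)
    (n : ℕ)
    (T : ContinuousMultilinearMap ℂ (fun j : Fin m => PiLp (p j) fun _ : Fin n => ℂ)
      (PiLp u fun _ : Fin n => ℂ))
    (hT1 : ∀ l : Fin n,
      T (fun j => (WithLp.equiv (p j) (Fin n → ℂ)).symm (Pi.single l 1)) =
        (WithLp.equiv u (Fin n → ℂ)).symm
          (fun i : Fin n => Complex.exp (2 * Real.pi * Complex.I * (i : ℕ) * (l : ℕ) / n)))
    (hT2 : ∀ k : Fin m → Fin n, (¬ ∃ l, ∀ j, k j = l) →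
      T (fun j => (WithLp.equiv (p j) (Fin n → ℂ)).symm (Pi.single (k j) 1)) = 0) :
    ‖T‖ ≤ (n : ℝ) ^ (1 / 2 + (u.toReal)⁻¹ - S) := by
  classical
  have hbn : (0 : ℝ) ≤ (n : ℝ) ^ (1 / 2 + (u.toReal)⁻¹ - S) :=
    Real.rpow_nonneg (Nat.cast_nonneg n) _
  have hUtop : u ≠ ∞ := ne_top_of_le_ne_top ENNReal.ofNat_ne_top hu
  have hU1 : (1 : ℝ) ≤ u.toReal := by
    rw [← ENNReal.toReal_one]
    exact ENNReal.toReal_mono hUtop (Fact.out)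
  have hU0 : 0 < u.toReal := lt_of_lt_of_le one_pos hU1
  have hU2 : u.toReal ≤ 2 := by
    have := ENNReal.toReal_mono ENNReal.ofNat_ne_top hu
    simpa using this
  rcases Nat.eq_zero_or_pos n with hn0 | hnpos
  · subst hn0
    refine ContinuousMultilinearMap.opNorm_le_bound hbn ?_
    intro x
    have hz : ‖T x‖ = 0 := by
      rw [PiLp.norm_eq_sum hU0]
      rw [show (∑ i : Fin 0, ‖T x i‖ ^ u.toReal) = 0 from rfl]
      rw [Real.zero_rpow (by positivity)]
    rw [hz]
    exact mul_nonneg hbn (Finset.prod_nonneg fun j _ => norm_nonneg _)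
  · refine ContinuousMultilinearMap.opNorm_le_bound hbn ?_
    intro x
    have hn : (0 : ℝ) < n := Nat.cast_pos.mpr hnpos
    set U := u.toReal with hUdef
    set z : Fin n → ℂ := fun l => ∏ j, x j l with hzdef
    set y : Fin n → ℂ := fun i : Fin n =>
      ∑ l : Fin n, Complex.exp (2 * Real.pi * Complex.I * (i : ℕ) * (l : ℕ) / n) * z l with hydef
    have hTx : ∀ i, T x i = y i := fun i =>
      stmt15_repr m hm p u n T hT1 hT2 x i
    set N : ℝ := ∏ j, ‖x j‖ with hNdef
    have hNnn : 0 ≤ N := Finset.prod_nonneg fun j _ => norm_nonneg _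
    have hnormTx : ‖T x‖ = (∑ i, ‖y i‖ ^ U) ^ (1 / U) := by
      rw [PiLp.norm_eq_sum hU0]
      congr 1
      exact Finset.sum_congr rfl fun i _ => by rw [hTx i]
    have h2 := stmt15_step2 hU1 hU2 y
    have h3 : ∑ i, ‖y i‖ ^ 2 = n * ∑ l, ‖z l‖ ^ 2 := stmt15_parseval n z
    have h4 : ∑ l, ‖z l‖ ^ 2 ≤ (n : ℝ) ^ (1 - 2 * S) * ∏ j, ‖x j‖ ^ 2 := by
      calc ∑ l, ‖z l‖ ^ 2 = ∑ l, ∏ j, ‖x j l‖ ^ 2 := by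
            refine Finset.sum_congr rfl fun l _ => ?_
            rw [hzdef]
            dsimp only
            rw [norm_prod, ← Finset.prod_pow]
        _ ≤ _ := stmt15_step4 p S hS hS2 x
    have hQb : ∑ i, ‖y i‖ ^ 2 ≤ (n : ℝ) ^ (2 - 2 * S) * N ^ 2 := by
      rw [h3]
      calc (n : ℝ) * ∑ l, ‖z l‖ ^ 2
          ≤ n * ((n : ℝ) ^ (1 - 2 * S) * ∏ j, ‖x j‖ ^ 2) :=
            mul_le_mul_of_nonneg_left h4 (Nat.cast_nonneg n)
        _ = (n : ℝ) ^ (2 - 2 * S) * N ^ 2 := by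
            rw [hNdef, ← Finset.prod_pow,
              show (2 - 2 * S : ℝ) = 1 + (1 - 2 * S) by ring,
              Real.rpow_add hn, Real.rpow_one]
            ring
    have hsum_le : ∑ i, ‖y i‖ ^ U
        ≤ ((n : ℝ) ^ (2 - 2 * S) * N ^ 2) ^ (U / 2) * (n : ℝ) ^ (1 - U / 2) := by
      refine le_trans h2 (mul_le_mul_of_nonneg_right ?_
        (Real.rpow_nonneg (Nat.cast_nonneg n) _))
      exact Real.rpow_le_rpow (Finset.sum_nonneg fun i _ => by positivity) hQb
        (by positivity)
    have hfin : (((n : ℝ) ^ (2 - 2 * S) * N ^ 2) ^ (U / 2) * (n : ℝ) ^ (1 - U / 2)) ^ (1 / U)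
        = (n : ℝ) ^ (1 / 2 + U⁻¹ - S) * N := by
      rw [← Real.rpow_two N, Real.mul_rpow (Real.rpow_nonneg hn.le _)
        (Real.rpow_nonneg hNnn _),
        ← Real.rpow_mul hn.le, ← Real.rpow_mul hNnn,
        mul_assoc, mul_comm ((N : ℝ) ^ (2 * (U / 2))) _, ← mul_assoc,
        ← Real.rpow_add hn,
        Real.mul_rpow (Real.rpow_nonneg hn.le _) (Real.rpow_nonneg hNnn _),
        ← Real.rpow_mul hn.le, ← Real.rpow_mul hNnn]
      congr 1
      · congr 1
        field_simp
        ring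
      · rw [show (2 * (U / 2) * (1 / U) : ℝ) = 1 by field_simp, Real.rpow_one]
    calc ‖T x‖ = (∑ i, ‖y i‖ ^ U) ^ (1 / U) := hnormTx
      _ ≤ (((n : ℝ) ^ (2 - 2 * S) * N ^ 2) ^ (U / 2) * (n : ℝ) ^ (1 - U / 2)) ^ (1 / U) :=
          Real.rpow_le_rpow (Finset.sum_nonneg fun i _ => by positivity) hsum_le
            (by positivity)
      _ = (n : ℝ) ^ (1 / 2 + U⁻¹ - S) * N := hfin
end

section
/- Suppose $t \ge 1$ and $C>0$ are such that for all $n$ and all $m$-linear maps $T : \ell_{p_1}^n \times \cdots \times \ell_{p_m}^n \to \ell_u^n$ (with $1 \le u \le q \le 2$ and $\frac{1}{u}-\frac{1}{q} \le \frac{1}{p_1}+\cdots+\frac{1}{p_m} < \frac{1}{2}$), one has $(\sum_{i_1,\dots,i_m}\|T(e_{i_1},\dots,e_{i_m})\|_{\ell_q}^t)^{1/t} \le C\|T\|$. Then $\frac{1}{t} \le \frac{1}{2} + \frac{1}{u} - \frac{1}{q} - (\frac{1}{p_1}+\cdots+\frac{1}{p_m})$. -/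
open scoped ENNReal Classical


open MeasureTheory Finset in
lemma holder_slack {ι : Type*} {n : ℕ} (s : Finset ι) (e : ι → ℝ) (he : ∀ i ∈ s, 0 ≤ e i)
    (θ : ℝ) (hθ : 0 ≤ θ) (hsum : θ + ∑ i ∈ s, e i = 1) (f : ι → Fin n → ℝ)
    (hf : ∀ i j, 0 ≤ f i j) :
    ∑ j, ∏ i ∈ s, f i j ^ e i ≤ (n : ℝ) ^ θ * ∏ i ∈ s, (∑ j, f i j) ^ e i := by
  set F : ι → Fin n → ℝ≥0∞ := fun i j => ENNReal.ofReal (f i j) with hF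
  have key : ∑ j, ∏ i ∈ s, (F i j) ^ e i ≤
      (n : ℝ≥0∞) ^ θ * ∏ i ∈ s, (∑ j, F i j) ^ e i := by
    have h := ENNReal.lintegral_mul_prod_norm_pow_le (μ := Measure.count (α := Fin n)) s
      (g := fun _ => 1) (f := fun i j => F i j) aemeasurable_const
      (fun i _ => (measurable_of_countable _).aemeasurable) θ hsum hθ he
    simp only [lintegral_count, tsum_fintype] at h
    simpa using h
  have h1 : ENNReal.ofReal (∑ j, ∏ i ∈ s, f i j ^ e i) = ∑ j, ∏ i ∈ s, (F i j) ^ e i := by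
    rw [ENNReal.ofReal_sum_of_nonneg
      (fun j _ => Finset.prod_nonneg fun i hi => Real.rpow_nonneg (hf i j) _)]
    refine Finset.sum_congr rfl fun j _ => ?_
    rw [ENNReal.ofReal_prod_of_nonneg (fun i hi => Real.rpow_nonneg (hf i j) _)]
    exact Finset.prod_congr rfl fun i hi => (ENNReal.ofReal_rpow_of_nonneg (hf i j) (he i hi)).symm
  have h2 : ((n : ℝ≥0∞) ^ θ * ∏ i ∈ s, (∑ j, F i j) ^ e i) =
      ENNReal.ofReal ((n : ℝ) ^ θ * ∏ i ∈ s, (∑ j, f i j) ^ e i) := by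
    rw [ENNReal.ofReal_mul (by positivity),
      ENNReal.ofReal_prod_of_nonneg
        (fun i hi => Real.rpow_nonneg (Finset.sum_nonneg fun j _ => hf i j) _)]
    congr 1
    · rw [← ENNReal.ofReal_natCast n,
        ENNReal.ofReal_rpow_of_nonneg (by positivity) hθ]
    · refine Finset.prod_congr rfl fun i hi => ?_
      rw [← ENNReal.ofReal_sum_of_nonneg (fun j _ => hf i j),
        ENNReal.ofReal_rpow_of_nonneg (Finset.sum_nonneg fun j _ => hf i j) (he i hi)]
  rw [← h1, h2] at key
  exact (ENNReal.ofReal_le_ofReal_iff (mul_nonneg (Real.rpow_nonneg (Nat.cast_nonneg n) _) (Finset.prod_nonneg fun i hi => Real.rpow_nonneg (Finset.sum_nonneg fun j _ => hf i j) _))).mp key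
noncomputable def ch (n : ℕ) (i j : Fin n) : ℂ :=
  Complex.exp ((2 * Real.pi * (i * j / n) : ℝ) * Complex.I)

lemma ch_abs (n : ℕ) (i j : Fin n) : ‖ch n i j‖ = 1 :=
  Complex.norm_exp_ofReal_mul_I _

lemma ch_orth (n : ℕ) (j j' : Fin n) :
    ∑ i : Fin n, ch n i j * (starRingEnd ℂ) (ch n i j') =
      if j = j' then (n : ℂ) else 0 := by
  have hn : 0 < n := j.pos
  have hn' : (n : ℝ) ≠ 0 := Nat.cast_ne_zero.mpr hn.ne'
  rcases eq_or_ne j j' with h | h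
  · subst h
    simp only [if_pos rfl]
    have : ∀ i : Fin n, ch n i j * (starRingEnd ℂ) (ch n i j) = 1 := by
      intro i
      rw [Complex.mul_conj]
      norm_cast
      rw [← Complex.sq_norm, ch_abs]
      norm_num
    simp [this]
  · rw [if_neg h]
    set z : ℂ := Complex.exp ((2 * Real.pi * (((j:ℝ) - (j':ℝ)) / n) : ℝ) * Complex.I) with hz
    have hterm : ∀ i : Fin n, ch n i j * (starRingEnd ℂ) (ch n i j') = z ^ (i : ℕ) := by
      intro i
      have hr : 2 * Real.pi * ((i:ℝ) * (j:ℝ) / n) - 2 * Real.pi * ((i:ℝ) * (j':ℝ) / n)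
          = (i:ℝ) * (2 * Real.pi * (((j:ℝ) - (j':ℝ)) / n)) := by
        field_simp
      rw [ch, ch, ← Complex.exp_conj, ← Complex.exp_add, hz, ← Complex.exp_nat_mul]
      congr 1
      simp only [map_mul, Complex.conj_ofReal, Complex.conj_I, mul_neg]
      rw [show ((2 * Real.pi * ((i:ℝ) * (j:ℝ) / n) : ℝ) : ℂ) * Complex.I +
          -(((2 * Real.pi * ((i:ℝ) * (j':ℝ) / n) : ℝ) : ℂ) * Complex.I) =
          ((2 * Real.pi * ((i:ℝ) * (j:ℝ) / n) - 2 * Real.pi * ((i:ℝ) * (j':ℝ) / n) : ℝ) : ℂ)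
            * Complex.I by push_cast; ring, hr]
      push_cast
      ring
    have hz1 : z ≠ 1 := by
      rw [hz, Ne, Complex.exp_eq_one_iff]
      rintro ⟨k, hk⟩
      have h2 : 2 * Real.pi * (((j:ℝ) - (j':ℝ)) / n) = k * (2 * Real.pi) := by
        have := congrArg Complex.im hk
        simpa using this
      have h3 : (j:ℝ) - (j':ℝ) = k * n := by
        have h2' : (2 * Real.pi) * (((j:ℝ) - (j':ℝ)) / n) = (2 * Real.pi) * k := by
          linarith
        have h4 := mul_left_cancel₀ (by positivity : (2 * Real.pi) ≠ 0) h2'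
        exact (div_eq_iff hn').mp h4
      have hj1 : (j:ℝ) < n := by exact_mod_cast j.2
      have hj2 : (j':ℝ) < n := by exact_mod_cast j'.2
      have hj3 : (0:ℝ) ≤ (j:ℝ) := by positivity
      have hj4 : (0:ℝ) ≤ (j':ℝ) := by positivity
      have hnn : (0:ℝ) < n := by exact_mod_cast hn
      rcases lt_trichotomy k 0 with hk' | hk' | hk'
      · have hk1 : (k:ℝ) ≤ -1 := by exact_mod_cast (by omega : k ≤ -1)
        nlinarith
      · subst hk'
        norm_num at h3
        have : (j:ℕ) = (j':ℕ) := by exact_mod_cast (by linarith : (j:ℝ) = (j':ℝ))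
        exact h (Fin.ext this)
      · have hk1 : (1:ℝ) ≤ (k:ℝ) := by exact_mod_cast (by omega : 1 ≤ k)
        nlinarith
    have hzn : z ^ n = 1 := by
      rw [hz, ← Complex.exp_nat_mul]
      rw [show (n : ℂ) * (((2 * Real.pi * (((j:ℝ) - (j':ℝ)) / n) : ℝ) : ℂ) * Complex.I) =
          (((j : ℤ) - (j' : ℤ) : ℤ) : ℂ) * (2 * Real.pi * Complex.I) by
        have hnc : (n:ℂ) ≠ 0 := Nat.cast_ne_zero.mpr hn.ne'
        push_cast
        field_simp]
      exact Complex.exp_int_mul_two_pi_mul_I _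
    calc ∑ i : Fin n, ch n i j * (starRingEnd ℂ) (ch n i j')
        = ∑ i : Fin n, z ^ (i : ℕ) := by simp [hterm]
      _ = ∑ i ∈ Finset.range n, z ^ i := Fin.sum_univ_eq_sum_range _ _
      _ = (z ^ n - 1) / (z - 1) := geom_sum_eq hz1 n
      _ = 0 := by rw [hzn]; simp

lemma planch (n : ℕ) (y : Fin n → ℂ) :
    ∑ i, ‖∑ j, ch n i j * y j‖ ^ 2 = (n : ℝ) * ∑ j, ‖y j‖ ^ 2 := by
  have h1 : ∀ z : ℂ, z * (starRingEnd ℂ) z = ((‖z‖ ^ 2 : ℝ) : ℂ) := fun z => by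
    rw [Complex.mul_conj]
    simp [Complex.normSq_eq_norm_sq]
  have key : ∑ i, ((∑ j, ch n i j * y j) * (starRingEnd ℂ) (∑ j, ch n i j * y j)) =
      (n : ℂ) * ∑ j, (y j * (starRingEnd ℂ) (y j)) := by
    have expand : ∀ i : Fin n, (∑ j, ch n i j * y j) * (starRingEnd ℂ) (∑ j, ch n i j * y j)
        = ∑ j, ∑ j', (ch n i j * (starRingEnd ℂ) (ch n i j')) * (y j * (starRingEnd ℂ) (y j')) := by
      intro i
      rw [map_sum, Finset.sum_mul_sum]
      refine Finset.sum_congr rfl fun j _ => Finset.sum_congr rfl fun j' _ => ?_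
      rw [map_mul]
      ring
    calc ∑ i, ((∑ j, ch n i j * y j) * (starRingEnd ℂ) (∑ j, ch n i j * y j))
        = ∑ i : Fin n, ∑ j, ∑ j',
            (ch n i j * (starRingEnd ℂ) (ch n i j')) * (y j * (starRingEnd ℂ) (y j')) := by
          exact Finset.sum_congr rfl fun i _ => expand i
      _ = ∑ j, ∑ j', (∑ i, ch n i j * (starRingEnd ℂ) (ch n i j')) * (y j * (starRingEnd ℂ) (y j')) := by
          rw [Finset.sum_comm]
          refine Finset.sum_congr rfl fun j _ => ?_
          rw [Finset.sum_comm]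
          refine Finset.sum_congr rfl fun j' _ => ?_
          rw [Finset.sum_mul]
      _ = ∑ j, (n : ℂ) * (y j * (starRingEnd ℂ) (y j)) := by
          refine Finset.sum_congr rfl fun j _ => ?_
          simp only [ch_orth, ite_mul, zero_mul]
          rw [Finset.sum_ite_eq]
          simp
      _ = (n : ℂ) * ∑ j, (y j * (starRingEnd ℂ) (y j)) := by rw [Finset.mul_sum]
  simp only [h1] at key
  exact_mod_cast key

noncomputable def Mmap (m n : ℕ) (p : Fin m → ℝ≥0∞) (u : ℝ≥0∞) :
    MultilinearMap ℂ (fun l : Fin m => PiLp (p l) fun _ : Fin n => ℂ)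
      (PiLp u fun _ : Fin n => ℂ) :=
  (WithLp.linearEquiv u ℂ (Fin n → ℂ)).symm.toLinearMap.compMultilinearMap
    (MultilinearMap.pi fun i : Fin n => ∑ j : Fin n, ch n i j •
      ((MultilinearMap.mkPiAlgebra ℂ (Fin m) ℂ).compLinearMap
        (fun l => (LinearMap.proj j).comp (WithLp.linearEquiv (p l) ℂ (Fin n → ℂ)).toLinearMap)))

lemma Mmap_apply (m n : ℕ) (p : Fin m → ℝ≥0∞) (u : ℝ≥0∞)
    (x : ∀ l : Fin m, PiLp (p l) fun _ : Fin n => ℂ) (i : Fin n) :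
    Mmap m n p u x i = ∑ j, ch n i j * ∏ l, x l j := by
  simp [Mmap, MultilinearMap.sum_apply, smul_eq_mul]

lemma piLp_apply_le {n : ℕ} {r : ℝ≥0∞} [Fact (1 ≤ r)] (x : PiLp r fun _ : Fin n => ℂ)
    (j : Fin n) : ‖x j‖ ≤ ‖x‖ := by
  rcases eq_or_ne r ∞ with h | h
  · subst h
    rw [PiLp.norm_eq_ciSup]
    exact le_ciSup (f := fun i => ‖x i‖) (Set.Finite.bddAbove (Set.finite_range _)) j
  · have hr1 : 1 ≤ r.toReal := by
      rw [← ENNReal.toReal_one]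
      exact ENNReal.toReal_mono h Fact.out
    have hr0 : 0 < r.toReal := lt_of_lt_of_le one_pos hr1
    rw [PiLp.norm_eq_sum hr0]
    have h1 : ‖x j‖ = (‖x j‖ ^ r.toReal) ^ (1 / r.toReal) := by
      rw [← Real.rpow_mul (norm_nonneg _), mul_one_div_cancel hr0.ne', Real.rpow_one]
    rw [h1]
    refine Real.rpow_le_rpow (Real.rpow_nonneg (norm_nonneg _) _) ?_ (by positivity)
    exact Finset.single_le_sum (fun i _ => Real.rpow_nonneg (norm_nonneg _) _) (Finset.mem_univ j)

lemma Mmap_norm_le (m n : ℕ) (hn : 0 < n) (p : Fin m → ℝ≥0∞) [∀ j, Fact (1 ≤ p j)]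
    (u : ℝ≥0∞) [Fact (1 ≤ u)] (hu2 : u ≤ 2) (S : ℝ) (hS : S = ∑ j, ((p j).toReal)⁻¹)
    (hS2 : S < 1 / 2) (x : ∀ l : Fin m, PiLp (p l) fun _ : Fin n => ℂ) :
    ‖Mmap m n p u x‖ ≤ (n : ℝ) ^ ((u.toReal)⁻¹ + 1 / 2 - S) * ∏ l, ‖x l‖ := by
  have hnR : (0:ℝ) < n := by exact_mod_cast hn
  set u' : ℝ := u.toReal with hu'
  have hu1 : 1 ≤ u' := by
    rw [hu', ← ENNReal.toReal_one]
    exact ENNReal.toReal_mono (lt_of_le_of_lt hu2 (by norm_num)).ne Fact.out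
  have hu'2 : u' ≤ 2 := by
    rw [hu', show (2:ℝ) = (2:ℝ≥0∞).toReal by norm_num]
    exact ENNReal.toReal_mono (by norm_num) hu2
  have hu0 : 0 < u' := lt_of_lt_of_le one_pos hu1
  set A : Finset (Fin m) := Finset.univ.filter (fun l => p l ≠ ∞) with hA
  have hpA : ∀ l ∈ A, 1 ≤ (p l).toReal := by
    intro l hl
    rw [hA, Finset.mem_filter] at hl
    rw [← ENNReal.toReal_one]
    exact ENNReal.toReal_mono hl.2 Fact.out
  have hSA : ∑ l ∈ A, ((p l).toReal)⁻¹ = S := by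
    rw [hS, hA]
    exact Finset.sum_filter_of_ne fun l _ hne hl => hne (by rw [hl]; simp)
  have hS0 : 0 ≤ S := by rw [hS]; positivity
  set P : ℝ := ∏ l, ‖x l‖ with hP
  have hP0 : 0 ≤ P := Finset.prod_nonneg fun l _ => norm_nonneg _
  set y : Fin n → ℂ := fun j => ∏ l, x l j with hy
  -- Plancherel
  have hQ : ∑ i, ‖Mmap m n p u x i‖ ^ (2:ℕ) = n * ∑ j, ‖y j‖ ^ (2:ℕ) := by
    have h : ∀ i : Fin n, Mmap m n p u x i = ∑ j, ch n i j * y j := fun i =>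
      Mmap_apply m n p u x i
    simp_rw [h]
    exact planch n y
  -- split off infinite exponents
  have hsplit : ∑ j, ‖y j‖ ^ (2:ℕ) ≤
      (∏ l ∈ Aᶜ, ‖x l‖ ^ (2:ℕ)) * ∑ j, ∏ l ∈ A, ‖x l j‖ ^ (2:ℕ) := by
    rw [Finset.mul_sum]
    refine Finset.sum_le_sum fun j _ => ?_
    have h1 : ‖y j‖ ^ (2:ℕ) = ∏ l, ‖x l j‖ ^ (2:ℕ) := by
      rw [hy]
      simp only [norm_prod]
      rw [Finset.prod_pow]
    rw [h1, ← Finset.prod_mul_prod_compl A (fun l => ‖x l j‖ ^ (2:ℕ)), mul_comm]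
    refine mul_le_mul_of_nonneg_right ?_ (Finset.prod_nonneg fun l _ => by positivity)
    refine Finset.prod_le_prod (fun l _ => by positivity) fun l _ => ?_
    exact pow_le_pow_left₀ (norm_nonneg _) (piLp_apply_le (x l) j) 2
  -- Hölder
  have hhold : ∑ j, ∏ l ∈ A, ‖x l j‖ ^ (2:ℕ) ≤
      (n:ℝ) ^ (1 - 2*S) * ∏ l ∈ A, ‖x l‖ ^ (2:ℕ) := by
    have key := holder_slack (n := n) A (fun l => 2 * ((p l).toReal)⁻¹)
      (fun l _ => by positivity) (1 - 2*S) (by linarith) (by rw [← Finset.mul_sum, hSA]; ring)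
      (fun l j => ‖x l j‖ ^ ((p l).toReal)) (fun l j => Real.rpow_nonneg (norm_nonneg _) _)
    have hL : ∀ j : Fin n, ∏ l ∈ A, (‖x l j‖ ^ ((p l).toReal)) ^ (2 * ((p l).toReal)⁻¹)
        = ∏ l ∈ A, ‖x l j‖ ^ (2:ℕ) := by
      intro j
      refine Finset.prod_congr rfl fun l hl => ?_
      have hp0 : (p l).toReal ≠ 0 := (lt_of_lt_of_le one_pos (hpA l hl)).ne'
      rw [← Real.rpow_mul (norm_nonneg _),
        show (p l).toReal * (2 * ((p l).toReal)⁻¹) = (2:ℝ) from by field_simp,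
        show (2:ℝ) = ((2:ℕ):ℝ) from by norm_num, Real.rpow_natCast]
    have hR : ∀ l ∈ A, (∑ j, ‖x l j‖ ^ ((p l).toReal)) ^ (2 * ((p l).toReal)⁻¹)
        = ‖x l‖ ^ (2:ℕ) := by
      intro l hl
      have hp0 : 0 < (p l).toReal := lt_of_lt_of_le one_pos (hpA l hl)
      have hnorm : ‖x l‖ = (∑ j, ‖x l j‖ ^ ((p l).toReal)) ^ (1/(p l).toReal) :=
        PiLp.norm_eq_sum hp0 (x l)
      have hsum0 : (0:ℝ) ≤ ∑ j, ‖x l j‖ ^ ((p l).toReal) :=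
        Finset.sum_nonneg fun j _ => Real.rpow_nonneg (norm_nonneg _) _
      rw [hnorm, ← Real.rpow_natCast ((∑ j, ‖x l j‖ ^ ((p l).toReal)) ^ (1/(p l).toReal)) 2,
        ← Real.rpow_mul hsum0]
      congr 1
      push_cast
      field_simp
    rw [Finset.prod_congr rfl (fun l hl => hR l hl)] at key
    calc ∑ j, ∏ l ∈ A, ‖x l j‖ ^ (2:ℕ)
        = ∑ j, ∏ l ∈ A, (‖x l j‖ ^ ((p l).toReal)) ^ (2 * ((p l).toReal)⁻¹) := by
          exact (Finset.sum_congr rfl fun j _ => (hL j)).symm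
      _ ≤ (n:ℝ) ^ (1 - 2*S) * ∏ l ∈ A, ‖x l‖ ^ (2:ℕ) := key
  -- combine into a bound on Q
  have hQ2 : ∑ i, ‖Mmap m n p u x i‖ ^ (2:ℕ) ≤ (n:ℝ) ^ (2 - 2*S) * P ^ (2:ℕ) := by
    rw [hQ]
    have h1 : (n:ℝ) * ∑ j, ‖y j‖ ^ (2:ℕ) ≤
        (n:ℝ) * ((∏ l ∈ Aᶜ, ‖x l‖ ^ (2:ℕ)) * ((n:ℝ) ^ (1 - 2*S) * ∏ l ∈ A, ‖x l‖ ^ (2:ℕ))) := by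
      refine mul_le_mul_of_nonneg_left ?_ (le_of_lt hnR)
      refine le_trans hsplit (mul_le_mul_of_nonneg_left hhold
        (Finset.prod_nonneg fun l _ => by positivity))
    refine le_trans h1 (le_of_eq ?_)
    have hprod : (∏ l ∈ Aᶜ, ‖x l‖ ^ (2:ℕ)) * ∏ l ∈ A, ‖x l‖ ^ (2:ℕ) = P ^ (2:ℕ) := by
      rw [hP, mul_comm, Finset.prod_mul_prod_compl, Finset.prod_pow]
    have hpow : (n:ℝ) * (n:ℝ) ^ (1 - 2*S) = (n:ℝ) ^ (2 - 2*S) := by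
      rw [show (2 - 2*S : ℝ) = 1 + (1 - 2*S) by ring, Real.rpow_add hnR, Real.rpow_one]
    calc (n:ℝ) * ((∏ l ∈ Aᶜ, ‖x l‖ ^ (2:ℕ)) * ((n:ℝ) ^ (1 - 2*S) * ∏ l ∈ A, ‖x l‖ ^ (2:ℕ)))
        = ((n:ℝ) * (n:ℝ) ^ (1 - 2*S)) * ((∏ l ∈ Aᶜ, ‖x l‖ ^ (2:ℕ)) * ∏ l ∈ A, ‖x l‖ ^ (2:ℕ)) := by
          ring
      _ = (n:ℝ) ^ (2 - 2*S) * P ^ (2:ℕ) := by rw [hprod, hpow]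
  -- step 1 : u'-sum vs 2-sum
  have hstep1 : ∑ i, ‖Mmap m n p u x i‖ ^ u' ≤
      (n:ℝ) ^ (1 - u'/2) * (∑ i, ‖Mmap m n p u x i‖ ^ (2:ℕ)) ^ (u'/2) := by
    have key := holder_slack (n := n) (ι := Unit) Finset.univ (fun _ => u'/2)
      (fun _ _ => by positivity) (1 - u'/2) (by linarith) (by simp)
      (fun _ i => ‖Mmap m n p u x i‖ ^ (2:ℕ)) (fun _ i => by positivity)
    simp only [Finset.prod_const, Finset.card_univ, Fintype.card_unit, pow_one] at key
    calc ∑ i, ‖Mmap m n p u x i‖ ^ u'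
        = ∑ i, (‖Mmap m n p u x i‖ ^ (2:ℕ)) ^ (u'/2) := by
          refine Finset.sum_congr rfl fun i _ => ?_
          rw [← Real.rpow_natCast ‖Mmap m n p u x i‖ 2, ← Real.rpow_mul (norm_nonneg _)]
          congr 1
          push_cast
          ring
      _ ≤ (n:ℝ) ^ (1 - u'/2) * (∑ i, ‖Mmap m n p u x i‖ ^ (2:ℕ)) ^ (u'/2) := key
  -- final assembly
  have hfin : ∑ i, ‖Mmap m n p u x i‖ ^ u' ≤
      ((n:ℝ) ^ ((u.toReal)⁻¹ + 1/2 - S) * P) ^ u' := by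
    have h2 : (∑ i, ‖Mmap m n p u x i‖ ^ (2:ℕ)) ^ (u'/2) ≤
        ((n:ℝ) ^ (2 - 2*S) * P ^ (2:ℕ)) ^ (u'/2) := by
      refine Real.rpow_le_rpow ?_ hQ2 (by positivity)
      exact Finset.sum_nonneg fun i _ => by positivity
    have h3 := le_trans hstep1 (mul_le_mul_of_nonneg_left h2 (by positivity))
    refine le_trans h3 (le_of_eq ?_)
    rw [Real.mul_rpow (by positivity) (by positivity),
      Real.mul_rpow (by positivity) (by positivity),
      ← Real.rpow_natCast P 2, ← Real.rpow_mul hP0,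
      show ((2:ℕ):ℝ) * (u'/2) = u' from by push_cast; ring,
      ← Real.rpow_mul (le_of_lt hnR), ← Real.rpow_mul (le_of_lt hnR),
      ← mul_assoc, ← Real.rpow_add hnR]
    congr 2
    rw [← hu']
    field_simp
    ring
  -- conclude
  have hnorm : ‖Mmap m n p u x‖ = (∑ i, ‖Mmap m n p u x i‖ ^ u') ^ (1/u') :=
    PiLp.norm_eq_sum hu0 (Mmap m n p u x)
  rw [hnorm]
  have hrhs : ((n:ℝ) ^ ((u.toReal)⁻¹ + 1/2 - S) * P) =
      (((n:ℝ) ^ ((u.toReal)⁻¹ + 1/2 - S) * P) ^ u') ^ (1/u') := by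
    rw [← Real.rpow_mul (by positivity), mul_one_div_cancel hu0.ne', Real.rpow_one]
  rw [hP] at hrhs
  rw [hrhs]
  refine Real.rpow_le_rpow ?_ ?_ (by positivity)
  · exact Finset.sum_nonneg fun i _ => Real.rpow_nonneg (norm_nonneg _) _
  · rw [← hP]; exact hfin

/-- if `t ≥ 1` and `C > 0` are such that
`(∑ ‖T(e_{i₁},…,e_{i_m})‖_{ℓ_qⁿ}^t)^{1/t} ≤ C‖T‖` for every `n` and every `m`-linear
`T : ℓ_{p₁}ⁿ × ⋯ × ℓ_{p_m}ⁿ → ℓ_uⁿ` (with `1 ≤ u ≤ q ≤ 2` and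
`1/u - 1/q ≤ ∑ 1/p_j < 1/2`), then `1/t ≤ 1/2 + 1/u - 1/q - ∑ 1/p_j`. -/
theorem stmt16 (m : ℕ) (hm : 0 < m) (p : Fin m → ℝ≥0∞) [∀ j, Fact (1 ≤ p j)]
    (u q : ℝ≥0∞) [Fact (1 ≤ u)] [Fact (1 ≤ q)] (huq : u ≤ q) (hq : q ≤ 2)
    (S : ℝ) (hS : S = ∑ j, ((p j).toReal)⁻¹)
    (hS1 : (u.toReal)⁻¹ - (q.toReal)⁻¹ ≤ S) (hS2 : S < 1 / 2)
    (t C : ℝ) (ht : 1 ≤ t) (hC : 0 < C)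
    (hineq : ∀ (n : ℕ)
      (T : ContinuousMultilinearMap ℂ (fun j : Fin m => PiLp (p j) fun _ : Fin n => ℂ)
        (PiLp u fun _ : Fin n => ℂ)),
      (∑ k : Fin m → Fin n,
          ‖(WithLp.equiv q (Fin n → ℂ)).symm ((WithLp.equiv u (Fin n → ℂ))
            (T (fun j => (WithLp.equiv (p j) (Fin n → ℂ)).symm (Pi.single (k j) 1))))‖ ^ t) ^
          (1 / t) ≤ C * ‖T‖) :
    t⁻¹ ≤ 1 / 2 + (u.toReal)⁻¹ - (q.toReal)⁻¹ - S := by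
  have hu2 : u ≤ 2 := le_trans huq hq
  set u' : ℝ := u.toReal with hu'
  set q' : ℝ := q.toReal with hq'
  have hq1 : 1 ≤ q' := by
    rw [hq', ← ENNReal.toReal_one]
    exact ENNReal.toReal_mono (lt_of_le_of_lt hq (by norm_num)).ne Fact.out
  have hq0 : 0 < q' := lt_of_lt_of_le one_pos hq1
  have ht0 : 0 < t := lt_of_lt_of_le one_pos ht
  have key : ∀ n : ℕ, 0 < n →
      ((n:ℝ)) ^ (t⁻¹ + q'⁻¹) ≤ C * (n:ℝ) ^ (u'⁻¹ + 1/2 - S) := by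
    intro n hn
    have hnR : (0:ℝ) < n := by exact_mod_cast hn
    set K : ℝ := (n:ℝ) ^ (u'⁻¹ + 1/2 - S) with hK
    have hK0 : 0 ≤ K := Real.rpow_nonneg hnR.le _
    have hbound : ∀ x, ‖Mmap m n p u x‖ ≤ K * ∏ l, ‖x l‖ := fun x =>
      Mmap_norm_le m n hn p u hu2 S hS hS2 x
    set T := (Mmap m n p u).mkContinuous K hbound with hT
    have hTn : ‖T‖ ≤ K := MultilinearMap.mkContinuous_norm_le _ hK0 _
    have h := hineq n T
    have hval : ∀ j₀ : Fin n,
        ‖(WithLp.equiv q (Fin n → ℂ)).symm ((WithLp.equiv u (Fin n → ℂ))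
          (T (fun l => (WithLp.equiv (p l) (Fin n → ℂ)).symm
            (Pi.single ((Function.const (Fin m) j₀) l) 1))))‖ = (n:ℝ) ^ (q'⁻¹) := by
      intro j₀
      have happ : ∀ i : Fin n,
          (T (fun l => (WithLp.equiv (p l) (Fin n → ℂ)).symm (Pi.single j₀ 1))) i
            = ch n i j₀ := by
        intro i
        show Mmap m n p u (fun l => (WithLp.equiv (p l) (Fin n → ℂ)).symm (Pi.single j₀ 1)) i
          = ch n i j₀
        rw [Mmap_apply]
        have hprod : ∀ j : Fin n,
            (∏ l : Fin m, ((WithLp.equiv (p l) (Fin n → ℂ)).symm (Pi.single j₀ (1:ℂ))) j)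
              = if j = j₀ then (1:ℂ) else 0 := by
          intro j
          have : ∀ l : Fin m, ((WithLp.equiv (p l) (Fin n → ℂ)).symm (Pi.single j₀ (1:ℂ))) j
              = if j = j₀ then (1:ℂ) else 0 := by
            intro l
            simp [Pi.single_apply]
          rw [Finset.prod_congr rfl fun l _ => this l, Finset.prod_const]
          rcases eq_or_ne j j₀ with h | h
          · simp [h]
          · simp [h, zero_pow hm.ne']
        rw [Finset.sum_congr rfl fun j _ => by rw [hprod j]]
        simp
      have hcoord : ∀ i : Fin n,
          ((WithLp.equiv q (Fin n → ℂ)).symm ((WithLp.equiv u (Fin n → ℂ))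
            (T (fun l => (WithLp.equiv (p l) (Fin n → ℂ)).symm
              (Pi.single ((Function.const (Fin m) j₀) l) 1))))) i = ch n i j₀ := by
        intro i
        exact happ i
      rw [PiLp.norm_eq_sum hq0]
      rw [Finset.sum_congr rfl fun i _ => by
        rw [hcoord i, ch_abs, Real.one_rpow]]
      rw [Finset.sum_const, Finset.card_univ, Fintype.card_fin, nsmul_eq_mul, mul_one,
        one_div]
    -- lower bound for the sum
    have hlow : (n:ℝ) * ((n:ℝ) ^ (q'⁻¹)) ^ t ≤
        ∑ k : Fin m → Fin n,
          ‖(WithLp.equiv q (Fin n → ℂ)).symm ((WithLp.equiv u (Fin n → ℂ))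
            (T (fun j => (WithLp.equiv (p j) (Fin n → ℂ)).symm (Pi.single (k j) 1))))‖ ^ t := by
      have hinj : Function.Injective (fun j₀ : Fin n => Function.const (Fin m) j₀) :=
        fun a b hab => congrFun hab ⟨0, hm⟩
      calc (n:ℝ) * ((n:ℝ) ^ (q'⁻¹)) ^ t
          = ∑ j₀ : Fin n, ((n:ℝ) ^ (q'⁻¹)) ^ t := by
            rw [Finset.sum_const, Finset.card_univ, Fintype.card_fin, nsmul_eq_mul]
        _ = ∑ k ∈ Finset.univ.image (fun j₀ : Fin n => Function.const (Fin m) j₀),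
              ‖(WithLp.equiv q (Fin n → ℂ)).symm ((WithLp.equiv u (Fin n → ℂ))
                (T (fun j => (WithLp.equiv (p j) (Fin n → ℂ)).symm (Pi.single (k j) 1))))‖ ^ t := by
            rw [Finset.sum_image (fun a _ b _ hab => hinj hab)]
            exact Finset.sum_congr rfl fun j₀ _ => by rw [hval j₀]
        _ ≤ _ := Finset.sum_le_sum_of_subset_of_nonneg (Finset.subset_univ _)
            (fun k _ _ => Real.rpow_nonneg (norm_nonneg _) _)
    have hmain : ((n:ℝ) * ((n:ℝ) ^ (q'⁻¹)) ^ t) ^ (1/t) ≤ C * K := by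
      refine le_trans ?_ (le_trans h (mul_le_mul_of_nonneg_left hTn hC.le))
      exact Real.rpow_le_rpow (by positivity) hlow (by positivity)
    have hexp : ((n:ℝ) * ((n:ℝ) ^ (q'⁻¹)) ^ t) ^ (1/t) = (n:ℝ) ^ (t⁻¹ + q'⁻¹) := by
      have h1 : (n:ℝ) * (n:ℝ) ^ (q'⁻¹ * t) = (n:ℝ) ^ (1 + q'⁻¹ * t) := by
        rw [Real.rpow_add hnR, Real.rpow_one]
      rw [← Real.rpow_mul hnR.le, h1, ← Real.rpow_mul hnR.le]
      congr 1
      field_simp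
    rw [hexp] at hmain
    exact hmain
  -- asymptotic comparison
  by_contra hcon
  push_neg at hcon
  set α : ℝ := t⁻¹ + q'⁻¹ with hα
  set β : ℝ := u'⁻¹ + 1/2 - S with hβ
  have hαβ : 0 < α - β := by
    rw [hα, hβ]
    linarith
  have htend : Filter.Tendsto (fun n : ℕ => (n:ℝ) ^ (α - β)) Filter.atTop Filter.atTop :=
    (tendsto_rpow_atTop hαβ).comp tendsto_natCast_atTop_atTop
  obtain ⟨n, hbig, hn1⟩ :=
    ((htend.eventually_gt_atTop C).and (Filter.eventually_ge_atTop 1)).exists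
  have hn : 0 < n := hn1
  have hnR : (0:ℝ) < n := by exact_mod_cast hn
  have hk := key n hn
  have : C * (n:ℝ) ^ β < (n:ℝ) ^ α := by
    calc C * (n:ℝ) ^ β < (n:ℝ) ^ (α - β) * (n:ℝ) ^ β :=
          mul_lt_mul_of_pos_right hbig (Real.rpow_pos_of_pos hnR _)
      _ = (n:ℝ) ^ α := by rw [← Real.rpow_add hnR]; ring_nf
  linarith
end
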